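/- arXiv:2412.13425 — 5 statements merged into one kernel-verified Lean document; each statement's English description precedes it below -/
import Mathlib

section
/- Let n ≥ 2 be an integer, let λ > 0, and let p be any function as in the context (a solution of the singular ODE with p(0) = 1, p'(0) = 0). Then sign(p(π/2)) = sign(cos(λπ/2)) and sign(p'(π/2)) = sign(−sin(λπ/2)), where sign denotes the sign function with values in {−1, 0, 1}. -/
open Real Set

/-- One-sided (within `[0, π/2]`) first derivative of `p`. -/
noncomputable def pderiv (p : ℝ → ℝ) : ℝ → ℝ :=
  derivWithin p (Set.Icc 0 (Real.pi / 2))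

/-- One-sided (within `[0, π/2]`) second derivative of `p`. -/
noncomputable def pderiv2 (p : ℝ → ℝ) : ℝ → ℝ :=
  derivWithin (pderiv p) (Set.Icc 0 (Real.pi / 2))

/-- `p` is continuous and `C¹` on `[0, π/2]`, `C²` on `(0, π/2]`, solves the meridian ODE
`p'' + (n − 2)·(cos φ / sin φ)·p' + λ(λ + n − 2)·p = 0` on `(0, π/2]`, and satisfies the
initial conditions `p(0) = 1`, `p'(0) = 0`. -/
def IsMeridianSol (n : ℕ) (lam : ℝ) (p : ℝ → ℝ) : Prop :=
  ContinuousOn p (Set.Icc 0 (Real.pi / 2)) ∧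
  ContDiffOn ℝ 1 p (Set.Icc 0 (Real.pi / 2)) ∧
  ContDiffOn ℝ 2 p (Set.Ioc 0 (Real.pi / 2)) ∧
  (∀ φ ∈ Set.Ioc 0 (Real.pi / 2),
    pderiv2 p φ + ((n : ℝ) - 2) * (Real.cos φ / Real.sin φ) * pderiv p φ
      + lam * (lam + (n : ℝ) - 2) * p φ = 0) ∧
  p 0 = 1 ∧ pderiv p 0 = 0

namespace MeridianAux

lemma pi2_pos : (0:ℝ) < Real.pi / 2 := by positivity

lemma sign_mul_pos {c : ℝ} (hc : 0 < c) (x : ℝ) : Real.sign (c * x) = Real.sign x := by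
  rcases lt_trichotomy x 0 with h|h|h
  · rw [Real.sign_of_neg h, Real.sign_of_neg (mul_neg_of_pos_of_neg hc h)]
  · simp [h]
  · rw [Real.sign_of_pos h, Real.sign_of_pos (mul_pos hc h)]

lemma set_eventuallyEq {φ : ℝ} (hφ : φ ≠ 0) :
    Set.Icc (0:ℝ) (Real.pi/2) =ᶠ[nhds φ] Set.Ioc (0:ℝ) (Real.pi/2) := by
  rw [Filter.eventuallyEq_set]
  filter_upwards [eventually_ne_nhds hφ] with y hy
  simp only [mem_Icc, mem_Ioc]
  exact and_congr_left' ⟨fun h => lt_of_le_of_ne h (Ne.symm hy), le_of_lt⟩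

variable {n : ℕ} {lam : ℝ} {p : ℝ → ℝ}

lemma hasD (hp : IsMeridianSol n lam p) {φ : ℝ} (hφ : φ ∈ Set.Icc 0 (Real.pi/2)) :
    HasDerivWithinAt p (pderiv p φ) (Set.Icc 0 (Real.pi/2)) φ :=
  ((hp.2.1.differentiableOn one_ne_zero) φ hφ).hasDerivWithinAt

lemma contP (hp : IsMeridianSol n lam p) :
    ContinuousOn (pderiv p) (Set.Icc 0 (Real.pi/2)) :=
  hp.2.1.continuousOn_derivWithin (uniqueDiffOn_Icc pi2_pos) le_rfl

lemma contDP (hp : IsMeridianSol n lam p) :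
    ContDiffOn ℝ 1 (pderiv p) (Set.Ioc 0 (Real.pi/2)) := by
  have h : ContDiffOn ℝ 1 (derivWithin p (Set.Ioc 0 (Real.pi/2))) (Set.Ioc 0 (Real.pi/2)) :=
    hp.2.2.1.derivWithin (uniqueDiffOn_Ioc _ _) (by norm_num)
  exact h.congr fun y hy => derivWithin_congr_set (set_eventuallyEq (ne_of_gt hy.1))

lemma hasD2 (hp : IsMeridianSol n lam p) {φ : ℝ} (hφ : φ ∈ Set.Ioc 0 (Real.pi/2)) :
    HasDerivWithinAt (pderiv p) (pderiv2 p φ) (Set.Icc 0 (Real.pi/2)) φ := by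
  have hC1 : ContDiffOn ℝ 1 (pderiv p) (Set.Ioc 0 (Real.pi/2)) := contDP hp
  have hd : DifferentiableWithinAt ℝ (pderiv p) (Set.Ioc 0 (Real.pi/2)) φ :=
    (hC1.differentiableOn one_ne_zero) φ hφ
  have h2 : derivWithin (pderiv p) (Set.Ioc 0 (Real.pi/2)) φ = pderiv2 p φ :=
    (derivWithin_congr_set (set_eventuallyEq (ne_of_gt hφ.1))).symm
  exact (hasDerivWithinAt_congr_set (set_eventuallyEq (ne_of_gt hφ.1))).2
    (h2 ▸ hd.hasDerivWithinAt)

lemma pow_id (hn : 2 ≤ n) {φ : ℝ} (hs : Real.sin φ ≠ 0) :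
    ((n - 2 : ℕ) : ℝ) * Real.sin φ ^ (n - 2 - 1) * Real.cos φ
      = ((n:ℝ) - 2) * (Real.cos φ / Real.sin φ) * Real.sin φ ^ (n - 2) := by
  rcases eq_or_lt_of_le hn with h | h
  · simp [← h]
  · obtain ⟨m, rfl⟩ : ∃ m, n = m + 3 := ⟨n - 3, by omega⟩
    push_cast [Nat.add_sub_cancel]
    field_simp
    ring

lemma hasDg (hn : 2 ≤ n) (hp : IsMeridianSol n lam p) {φ : ℝ}
    (hφ : φ ∈ Set.Ioc 0 (Real.pi/2)) :
    HasDerivWithinAt (fun x => Real.sin x ^ (n-2) * pderiv p x)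
      (-(lam * (lam + (n:ℝ) - 2)) * Real.sin φ ^ (n-2) * p φ)
      (Set.Icc 0 (Real.pi/2)) φ := by
  have hsin : 0 < Real.sin φ :=
    Real.sin_pos_of_pos_of_lt_pi hφ.1 (by linarith [Real.pi_pos, hφ.2])
  have h1 : HasDerivWithinAt (fun x => Real.sin x ^ (n-2))
      (((n-2:ℕ):ℝ) * Real.sin φ ^ (n - 2 - 1) * Real.cos φ) (Set.Icc 0 (Real.pi/2)) φ :=
    ((Real.hasDerivAt_sin φ).pow _).hasDerivWithinAt
  have h2 := h1.mul (hasD2 hp hφ)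
  have hode := hp.2.2.2.1 φ hφ
  refine h2.congr_deriv ?_
  symm
  have hpow := pow_id hn hsin.ne'
  linear_combination (- Real.sin φ ^ (n-2)) * hode - (pderiv p φ) * hpow

lemma hasDW (hn : 2 ≤ n) (hp : IsMeridianSol n lam p) {φ : ℝ}
    (hφ : φ ∈ Set.Ioc 0 (Real.pi/2)) :
    HasDerivWithinAt
      (fun x => Real.sin x ^ (n-2) * pderiv p x * Real.cos x + p x * Real.sin x ^ (n-1))
      (((n:ℝ) - 1 - lam * (lam + (n:ℝ) - 2)) * (Real.sin φ ^ (n-2) * Real.cos φ * p φ))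
      (Set.Icc 0 (Real.pi/2)) φ := by
  have hφI : φ ∈ Set.Icc (0:ℝ) (Real.pi/2) := ⟨le_of_lt hφ.1, hφ.2⟩
  have h1 := (hasDg hn hp hφ).mul (Real.hasDerivAt_cos φ).hasDerivWithinAt
  have h2 := (hasD hp hφI).mul ((Real.hasDerivAt_sin φ).pow (n-1)).hasDerivWithinAt
  have h3 := h1.add h2
  refine h3.congr_deriv ?_
  symm
  have e1 : Real.sin φ ^ (n-1) = Real.sin φ ^ (n-2) * Real.sin φ := by
    rw [← pow_succ]; congr 1; omega
  have e2 : ((n-1:ℕ):ℝ) = (n:ℝ) - 1 := by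
    have h1 : (1:ℕ) ≤ n := by omega
    push_cast [h1]; ring
  have e3 : n - 1 - 1 = n - 2 := by omega
  rw [e3, Pi.pow_apply, e1, e2]
  ring

lemma Wcont (hp : IsMeridianSol n lam p) :
    ContinuousOn
      (fun x => Real.sin x ^ (n-2) * pderiv p x * Real.cos x + p x * Real.sin x ^ (n-1))
      (Set.Icc 0 (Real.pi/2)) :=
  (((Real.continuous_sin.continuousOn.pow _).mul (contP hp)).mul
      Real.continuous_cos.continuousOn).add
    (hp.1.mul (Real.continuous_sin.continuousOn.pow _))

lemma gcont (hp : IsMeridianSol n lam p) :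
    ContinuousOn (fun x => Real.sin x ^ (n-2) * pderiv p x) (Set.Icc 0 (Real.pi/2)) :=
  (Real.continuous_sin.continuousOn.pow _).mul (contP hp)

lemma sin_pos_of_Ioo {y : ℝ} (hy : y ∈ Set.Ioo 0 (Real.pi/2)) : 0 < Real.sin y :=
  Real.sin_pos_of_pos_of_lt_pi hy.1 (by linarith [Real.pi_pos, hy.2])

lemma cos_pos_of_Ioo {y : ℝ} (hy : y ∈ Set.Ioo 0 (Real.pi/2)) : 0 < Real.cos y :=
  Real.cos_pos_of_mem_Ioo ⟨by linarith [Real.pi_pos, hy.1], hy.2⟩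

lemma ganti (hn : 2 ≤ n) (hl0 : 0 < lam) (hp : IsMeridianSol n lam p)
    {c : ℝ} (hc : 0 < c) (hc2 : c ≤ Real.pi/2)
    (hpos : ∀ φ ∈ Set.Ioo (0:ℝ) c, 0 < p φ) :
    StrictAntiOn (fun x => Real.sin x ^ (n-2) * pderiv p x) (Set.Icc 0 c) := by
  have hn2 : (2:ℝ) ≤ (n:ℝ) := by exact_mod_cast hn
  apply strictAntiOn_of_deriv_neg (convex_Icc _ _)
    ((gcont hp).mono (Set.Icc_subset_Icc le_rfl hc2))
  intro y hy
  rw [interior_Icc] at hy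
  have hyO : y ∈ Set.Ioo (0:ℝ) (Real.pi/2) := ⟨hy.1, lt_of_lt_of_le hy.2 hc2⟩
  have hyI : y ∈ Set.Ioc (0:ℝ) (Real.pi/2) := ⟨hy.1, le_of_lt hyO.2⟩
  have hd := (hasDg hn hp hyI).hasDerivAt (Icc_mem_nhds hy.1 hyO.2)
  rw [hd.deriv]
  have hsin := sin_pos_of_Ioo hyO
  have hppos := hpos y hy
  have hμ : 0 < lam * (lam + (n:ℝ) - 2) := by nlinarith
  have : 0 < lam * (lam + (n:ℝ) - 2) * Real.sin y ^ (n-2) * p y := by positivity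
  linarith

lemma Wmono (hn : 2 ≤ n) (hp : IsMeridianSol n lam p)
    (hμlt : lam * (lam + (n:ℝ) - 2) < (n:ℝ) - 1)
    {c : ℝ} (hc : 0 < c) (hc2 : c ≤ Real.pi/2)
    (hpos : ∀ φ ∈ Set.Ioo (0:ℝ) c, 0 < p φ) :
    StrictMonoOn
      (fun x => Real.sin x ^ (n-2) * pderiv p x * Real.cos x + p x * Real.sin x ^ (n-1))
      (Set.Icc 0 c) := by
  apply strictMonoOn_of_deriv_pos (convex_Icc _ _)
    ((Wcont hp).mono (Set.Icc_subset_Icc le_rfl hc2))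
  intro y hy
  rw [interior_Icc] at hy
  have hyO : y ∈ Set.Ioo (0:ℝ) (Real.pi/2) := ⟨hy.1, lt_of_lt_of_le hy.2 hc2⟩
  have hyI : y ∈ Set.Ioc (0:ℝ) (Real.pi/2) := ⟨hy.1, le_of_lt hyO.2⟩
  have hd := (hasDW hn hp hyI).hasDerivAt (Icc_mem_nhds hy.1 hyO.2)
  rw [hd.deriv]
  have hsin := sin_pos_of_Ioo hyO
  have hcos := cos_pos_of_Ioo hyO
  have hppos := hpos y hy
  have h1 : 0 < (n:ℝ) - 1 - lam * (lam + (n:ℝ) - 2) := by linarith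
  positivity

lemma W_zero (hp : IsMeridianSol n lam p) (hn : 2 ≤ n) :
    Real.sin 0 ^ (n-2) * pderiv p 0 * Real.cos 0 + p 0 * Real.sin 0 ^ (n-1) = 0 := by
  rw [hp.2.2.2.2.2, Real.sin_zero, zero_pow (show n-1 ≠ 0 by omega)]
  ring

lemma W_pi2 :
    Real.sin (Real.pi/2) ^ (n-2) * pderiv p (Real.pi/2) * Real.cos (Real.pi/2)
      + p (Real.pi/2) * Real.sin (Real.pi/2) ^ (n-1) = p (Real.pi/2) := by
  rw [Real.sin_pi_div_two, Real.cos_pi_div_two, one_pow, one_pow]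
  ring

lemma Wconst_one (hn : 2 ≤ n) (hp : IsMeridianSol n 1 p) :
    ∀ φ ∈ Set.Icc (0:ℝ) (Real.pi/2),
      Real.sin φ ^ (n-2) * pderiv p φ * Real.cos φ + p φ * Real.sin φ ^ (n-1) = 0 := by
  have hWder0 : ∀ y ∈ Set.Ioo (0:ℝ) (Real.pi/2),
      deriv (fun x => Real.sin x ^ (n-2) * pderiv p x * Real.cos x
        + p x * Real.sin x ^ (n-1)) y = 0 := by
    intro y hy
    have hyI : y ∈ Set.Ioc (0:ℝ) (Real.pi/2) := ⟨hy.1, le_of_lt hy.2⟩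
    have hd := (hasDW hn hp hyI).hasDerivAt (Icc_mem_nhds hy.1 hy.2)
    rw [hd.deriv]
    have : (n:ℝ) - 1 - 1 * (1 + (n:ℝ) - 2) = 0 := by ring
    rw [this, zero_mul]
  have hWdiff : DifferentiableOn ℝ
      (fun x => Real.sin x ^ (n-2) * pderiv p x * Real.cos x + p x * Real.sin x ^ (n-1))
      (interior (Set.Icc (0:ℝ) (Real.pi/2))) := by
    rw [interior_Icc]
    intro y hy
    have hyI : y ∈ Set.Ioc (0:ℝ) (Real.pi/2) := ⟨hy.1, le_of_lt hy.2⟩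
    exact ((hasDW hn hp hyI).hasDerivAt
      (Icc_mem_nhds hy.1 hy.2)).differentiableAt.differentiableWithinAt
  intro φ hφ
  have hmo := monotoneOn_of_deriv_nonneg (convex_Icc _ _) (Wcont hp) hWdiff
    (by intro y hy; rw [interior_Icc] at hy; rw [hWder0 y hy])
  have han := antitoneOn_of_deriv_nonpos (convex_Icc _ _) (Wcont hp) hWdiff
    (by intro y hy; rw [interior_Icc] at hy; rw [hWder0 y hy])
  have h0mem : (0:ℝ) ∈ Set.Icc (0:ℝ) (Real.pi/2) := ⟨le_rfl, le_of_lt pi2_pos⟩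
  have h1 := hmo h0mem hφ hφ.1
  have h2 := han h0mem hφ hφ.1
  have hW0 := W_zero hp hn
  simp only [hW0] at h1 h2
  linarith

lemma base_pos (hn : 2 ≤ n) (hl0 : 0 < lam) (hl1 : lam ≤ 1) (hp : IsMeridianSol n lam p) :
    ∀ φ ∈ Set.Ico (0:ℝ) (Real.pi/2), 0 < p φ := by
  have hn2 : (2:ℝ) ≤ (n:ℝ) := by exact_mod_cast hn
  rcases lt_or_eq_of_le hl1 with hlt | heq
  · -- lam < 1 : first-zero argument
    have hμlt : lam * (lam + (n:ℝ) - 2) < (n:ℝ) - 1 := by nlinarith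
    intro x hx
    -- prove 0 < p φ for all φ ∈ [0, x]; apply at φ = x
    by_contra hcon
    push_neg at hcon
    have hTne : {φ | φ ∈ Set.Icc 0 x ∧ p φ ≤ 0}.Nonempty := ⟨x, ⟨hx.1, le_rfl⟩, hcon⟩
    set T : Set ℝ := {φ | φ ∈ Set.Icc 0 x ∧ p φ ≤ 0} with hT
    have hTbdd : BddBelow T := ⟨0, fun y hy => hy.1.1⟩
    set φ0 := sInf T with hφ0def
    have hφ0le : φ0 ≤ x := csInf_le hTbdd ⟨⟨hx.1, le_rfl⟩, hcon⟩
    have hφ0nn : 0 ≤ φ0 := le_csInf hTne (fun y hy => hy.1.1)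
    have hφ0lt : φ0 < Real.pi/2 := lt_of_le_of_lt hφ0le hx.2
    have hφ0I : φ0 ∈ Set.Icc (0:ℝ) (Real.pi/2) := ⟨hφ0nn, le_of_lt hφ0lt⟩
    have hpφ0 : p φ0 ≤ 0 := by
      have hsub : T ⊆ Set.Icc 0 (Real.pi/2) :=
        fun y hy => ⟨hy.1.1, le_trans hy.1.2 (le_of_lt hx.2)⟩
      have hcw : ContinuousWithinAt p T φ0 := ((hp.1 φ0 hφ0I).mono hsub)
      haveI := mem_closure_iff_nhdsWithin_neBot.1 (csInf_mem_closure hTne hTbdd)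
      exact le_of_tendsto hcw (eventually_nhdsWithin_of_forall (fun y hy => hy.2))
    have hφ0pos : 0 < φ0 := by
      rcases eq_or_lt_of_le hφ0nn with h | h
      · exfalso; rw [← h, hp.2.2.2.2.1] at hpφ0; linarith
      · exact h
    have hlow : ∀ φ ∈ Set.Ioo (0:ℝ) φ0, 0 < p φ := by
      intro φ hφ
      by_contra hc; push_neg at hc
      have : φ0 ≤ φ := csInf_le hTbdd ⟨⟨le_of_lt hφ.1, le_trans (le_of_lt hφ.2) hφ0le⟩, hc⟩
      exact absurd this (not_le.mpr hφ.2)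
    have hWm := Wmono hn hp hμlt hφ0pos (le_of_lt hφ0lt) hlow
    have hga := ganti hn hl0 hp hφ0pos (le_of_lt hφ0lt) hlow
    have hW0 := W_zero hp hn
    have h0mem : (0:ℝ) ∈ Set.Icc (0:ℝ) φ0 := ⟨le_rfl, hφ0nn⟩
    have hφ0mem : φ0 ∈ Set.Icc (0:ℝ) φ0 := ⟨hφ0nn, le_rfl⟩
    have hWpos : 0 < Real.sin φ0 ^ (n-2) * pderiv p φ0 * Real.cos φ0
        + p φ0 * Real.sin φ0 ^ (n-1) := by
      have := hWm h0mem hφ0mem hφ0pos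
      simpa [hp.2.2.2.2.2, zero_pow (show n-1 ≠ 0 by omega)] using this
    have hgneg : Real.sin φ0 ^ (n-2) * pderiv p φ0 < 0 := by
      have := hga h0mem hφ0mem hφ0pos
      simpa [hp.2.2.2.2.2] using this
    have hsin : 0 < Real.sin φ0 :=
      Real.sin_pos_of_pos_of_lt_pi hφ0pos (by linarith [Real.pi_pos])
    have hcos : 0 < Real.cos φ0 := Real.cos_pos_of_mem_Ioo
      ⟨by linarith [Real.pi_pos], hφ0lt⟩
    nlinarith [pow_pos hsin (n-1), pow_pos hsin (n-2)]
  · -- lam = 1 : p = cos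
    subst heq
    have hWconst := Wconst_one hn hp
    -- p = cos on [0, π/2)
    intro x hx
    rcases eq_or_lt_of_le hx.1 with h0 | h0
    · rw [← h0, hp.2.2.2.2.1]; norm_num
    · -- 0 < x < π/2 ; consider F = p/cos on [0,x]
      have hcosx : 0 < Real.cos x := Real.cos_pos_of_mem_Ioo ⟨by linarith [Real.pi_pos], hx.2⟩
      have hcospos : ∀ y ∈ Set.Icc (0:ℝ) x, 0 < Real.cos y := by
        intro y hy
        exact Real.cos_pos_of_mem_Ioo ⟨by linarith [Real.pi_pos, hy.1], lt_of_le_of_lt hy.2 hx.2⟩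
      have hFc : ContinuousOn (fun y => p y / Real.cos y) (Set.Icc 0 x) :=
        (hp.1.mono (Set.Icc_subset_Icc le_rfl (le_of_lt hx.2))).div
          Real.continuous_cos.continuousOn (fun y hy => (hcospos y hy).ne')
      have hFd : ∀ y ∈ Set.Ioo (0:ℝ) x,
          HasDerivAt (fun y => p y / Real.cos y) 0 y := by
        intro y hy
        have hyO : y ∈ Set.Ioo (0:ℝ) (Real.pi/2) := ⟨hy.1, lt_trans hy.2 hx.2⟩
        have hyI2 : y ∈ Set.Icc (0:ℝ) (Real.pi/2) := ⟨le_of_lt hy.1, le_of_lt hyO.2⟩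
        have hpy := (hasD hp hyI2).hasDerivAt (Icc_mem_nhds hy.1 hyO.2)
        have hcy : Real.cos y ≠ 0 := (cos_pos_of_Ioo hyO).ne'
        have hd := hpy.div (Real.hasDerivAt_cos y) hcy
        have hsin := sin_pos_of_Ioo hyO
        have hkey : pderiv p y * Real.cos y + p y * Real.sin y = 0 := by
          have hWc := hWconst y ⟨le_of_lt hy.1, le_of_lt hyO.2⟩
          have hpow : (0:ℝ) < Real.sin y ^ (n-2) := pow_pos hsin _
          have hsplit : Real.sin y ^ (n-1) = Real.sin y ^ (n-2) * Real.sin y := by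
            rw [← pow_succ]; congr 1; omega
          rw [hsplit] at hWc
          have : Real.sin y ^ (n-2) * (pderiv p y * Real.cos y + p y * Real.sin y) = 0 := by
            linarith [hWc]
          rcases mul_eq_zero.1 this with h | h
          · exact absurd h hpow.ne'
          · exact h
        refine hd.congr_deriv ?_
        symm
        rw [show pderiv p y * Real.cos y - p y * -Real.sin y
            = pderiv p y * Real.cos y + p y * Real.sin y by ring, hkey]
        simp
      have hmo := monotoneOn_of_deriv_nonneg (convex_Icc _ _) hFc
        (by rw [interior_Icc]; intro y hy; exact (hFd y hy).differentiableAt.differentiableWithinAt)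
        (by rw [interior_Icc]; intro y hy; rw [(hFd y hy).deriv])
      have han := antitoneOn_of_deriv_nonpos (convex_Icc _ _) hFc
        (by rw [interior_Icc]; intro y hy; exact (hFd y hy).differentiableAt.differentiableWithinAt)
        (by rw [interior_Icc]; intro y hy; rw [(hFd y hy).deriv])
      have h0mem : (0:ℝ) ∈ Set.Icc (0:ℝ) x := ⟨le_rfl, le_of_lt h0⟩
      have hxmem : x ∈ Set.Icc (0:ℝ) x := ⟨le_of_lt h0, le_rfl⟩
      have h1 := hmo h0mem hxmem (le_of_lt h0)
      have h2 := han h0mem hxmem (le_of_lt h0)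
      have hF0 : p 0 / Real.cos 0 = 1 := by rw [hp.2.2.2.2.1]; norm_num
      have hFx : p x / Real.cos x = 1 := le_antisymm (by rw [← hF0]; exact h2) (by rw [← hF0]; exact h1)
      have : p x = Real.cos x := by
        field_simp at hFx
        linarith [hFx]
      rw [this]; exact hcosx

lemma base_concl (hn : 2 ≤ n) (hl0 : 0 < lam) (hl1 : lam ≤ 1) (hp : IsMeridianSol n lam p) :
    (lam < 1 → 0 < p (Real.pi/2)) ∧ (lam = 1 → p (Real.pi/2) = 0) ∧
      pderiv p (Real.pi/2) < 0 := by
  have hn2 : (2:ℝ) ≤ (n:ℝ) := by exact_mod_cast hn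
  have hpos := base_pos hn hl0 hl1 hp
  have hposO : ∀ φ ∈ Set.Ioo (0:ℝ) (Real.pi/2), 0 < p φ :=
    fun φ hφ => hpos φ ⟨le_of_lt hφ.1, hφ.2⟩
  have h0mem : (0:ℝ) ∈ Set.Icc (0:ℝ) (Real.pi/2) := ⟨le_rfl, le_of_lt pi2_pos⟩
  have hπmem : (Real.pi/2) ∈ Set.Icc (0:ℝ) (Real.pi/2) := ⟨le_of_lt pi2_pos, le_rfl⟩
  have hP : pderiv p (Real.pi/2) < 0 := by
    have hga := ganti hn hl0 hp pi2_pos le_rfl hposO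
    have := hga h0mem hπmem pi2_pos
    simpa [hp.2.2.2.2.2] using this
  refine ⟨?_, ?_, hP⟩
  · intro hlt
    have hμlt : lam * (lam + (n:ℝ) - 2) < (n:ℝ) - 1 := by nlinarith
    have hWm := Wmono hn hp hμlt pi2_pos le_rfl hposO
    have := hWm h0mem hπmem pi2_pos
    simpa [hp.2.2.2.2.2, zero_pow (show n-1 ≠ 0 by omega)] using this
  · intro heq
    subst heq
    have := Wconst_one hn hp (Real.pi/2) hπmem
    simpa using this

lemma sinP_deriv0 (hp : IsMeridianSol n lam p) :
    HasDerivWithinAt (fun x => Real.sin x * pderiv p x) 0 (Set.Icc 0 (Real.pi/2)) 0 := by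
  rw [hasDerivWithinAt_iff_tendsto_slope]
  have h0mem : (0:ℝ) ∈ Set.Icc (0:ℝ) (Real.pi/2) := ⟨le_rfl, le_of_lt pi2_pos⟩
  have hbound : ∀ᶠ y in nhdsWithin 0 (Set.Icc 0 (Real.pi/2) \ {0}),
      ‖slope (fun x => Real.sin x * pderiv p x) 0 y‖ ≤ |pderiv p y| := by
    filter_upwards [self_mem_nhdsWithin] with y hy
    have hy0 : 0 < y := lt_of_le_of_ne hy.1.1 (Ne.symm hy.2)
    have hyπ : y ≤ Real.pi/2 := hy.1.2
    have hsnn : 0 ≤ Real.sin y :=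
      Real.sin_nonneg_of_nonneg_of_le_pi (le_of_lt hy0) (by linarith [Real.pi_pos])
    have hsle : Real.sin y ≤ y := Real.sin_le (le_of_lt hy0)
    rw [slope_def_field]
    simp only [Real.sin_zero, zero_mul, sub_zero]
    rw [Real.norm_eq_abs, abs_div, abs_mul]
    rw [div_le_iff₀ (by rwa [abs_of_pos hy0] : (0:ℝ) < |y|)]
    have h1 : |Real.sin y| ≤ |y| := by
      rw [abs_of_nonneg hsnn, abs_of_pos hy0]; exact hsle
    calc |Real.sin y| * |pderiv p y| ≤ |y| * |pderiv p y| :=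
          mul_le_mul_of_nonneg_right h1 (abs_nonneg _)
      _ = |pderiv p y| * |y| := by ring
  have htend : Filter.Tendsto (fun y => |pderiv p y|)
      (nhdsWithin 0 (Set.Icc 0 (Real.pi/2) \ {0})) (nhds 0) := by
    have h1 : Filter.Tendsto (pderiv p) (nhdsWithin 0 (Set.Icc 0 (Real.pi/2))) (nhds 0) := by
      have := (contP hp) 0 h0mem
      rwa [ContinuousWithinAt, hp.2.2.2.2.2] at this
    have h2 := h1.abs
    simp only [abs_zero] at h2
    exact h2.mono_left (nhdsWithin_mono 0 Set.diff_subset)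
  exact squeeze_zero_norm' hbound htend

lemma step (hn : 2 ≤ n) (hl1 : 1 < lam) (hp : IsMeridianSol n lam p) :
    IsMeridianSol n (lam - 1) (fun φ => Real.cos φ * p φ - Real.sin φ * pderiv p φ / lam) ∧
      Real.cos (Real.pi/2) * p (Real.pi/2)
          - Real.sin (Real.pi/2) * pderiv p (Real.pi/2) / lam
        = -(pderiv p (Real.pi/2)) / lam ∧
      pderiv (fun φ => Real.cos φ * p φ - Real.sin φ * pderiv p φ / lam) (Real.pi/2)
        = ((lam + (n:ℝ) - 3) * p (Real.pi/2)) := by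
  have hπ := Real.pi_pos
  have hn2 : (2:ℝ) ≤ (n:ℝ) := by exact_mod_cast hn
  have hlam0 : lam ≠ 0 := by linarith
  have h0mem : (0:ℝ) ∈ Set.Icc (0:ℝ) (Real.pi/2) := ⟨le_rfl, le_of_lt pi2_pos⟩
  have hπmem : (Real.pi/2) ∈ Set.Icc (0:ℝ) (Real.pi/2) := ⟨le_of_lt pi2_pos, le_rfl⟩
  set Q : ℝ → ℝ := fun φ => ((lam + (n:ℝ) - 3)/lam) *
      (Real.cos φ * pderiv p φ + lam * (Real.sin φ * p φ)) with hQdef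
  -- the modified ODE, cleared of denominators
  have hode' : ∀ φ ∈ Set.Ioc (0:ℝ) (Real.pi/2),
      Real.sin φ * pderiv2 p φ + ((n:ℝ)-2) * Real.cos φ * pderiv p φ
        + lam * (lam + (n:ℝ) - 2) * (Real.sin φ * p φ) = 0 := by
    intro φ hφ
    have hsin : 0 < Real.sin φ :=
      Real.sin_pos_of_pos_of_lt_pi hφ.1 (by linarith [hφ.2])
    have h := hp.2.2.2.1 φ hφ
    field_simp at h
    linear_combination h
  have hQd : ∀ φ ∈ Set.Icc (0:ℝ) (Real.pi/2),
      HasDerivWithinAt (fun φ => Real.cos φ * p φ - Real.sin φ * pderiv p φ / lam)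
        (Q φ) (Set.Icc 0 (Real.pi/2)) φ := by
    intro φ hφ
    rcases eq_or_lt_of_le hφ.1 with h0 | h0
    · -- φ = 0
      have h0' : φ = 0 := h0.symm
      subst h0'
      have h1 : HasDerivWithinAt (fun x => Real.cos x * p x)
          (-Real.sin 0 * p 0 + Real.cos 0 * pderiv p 0) (Set.Icc 0 (Real.pi/2)) 0 :=
        (Real.hasDerivAt_cos 0).hasDerivWithinAt.mul (hasD hp h0mem)
      have h2 := (sinP_deriv0 hp).div_const lam
      have h3 := h1.sub h2
      refine h3.congr_deriv ?_
      symm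
      rw [hQdef]
      simp [hp.2.2.2.2.2]
    · -- φ ∈ Ioc
      have hφI : φ ∈ Set.Ioc (0:ℝ) (Real.pi/2) := ⟨h0, hφ.2⟩
      have h1 : HasDerivWithinAt (fun x => Real.cos x * p x)
          (-Real.sin φ * p φ + Real.cos φ * pderiv p φ) (Set.Icc 0 (Real.pi/2)) φ :=
        (Real.hasDerivAt_cos φ).hasDerivWithinAt.mul (hasD hp hφ)
      have h2 : HasDerivWithinAt (fun x => Real.sin x * pderiv p x / lam)
          ((Real.cos φ * pderiv p φ + Real.sin φ * pderiv2 p φ) / lam)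
          (Set.Icc 0 (Real.pi/2)) φ :=
        ((Real.hasDerivAt_sin φ).hasDerivWithinAt.mul (hasD2 hp hφI)).div_const lam
      have h3 := h1.sub h2
      refine h3.congr_deriv ?_
      symm
      rw [hQdef]
      have h := hode' φ hφI
      field_simp
      linear_combination h
  have hqd_eq : ∀ φ ∈ Set.Icc (0:ℝ) (Real.pi/2),
      pderiv (fun φ => Real.cos φ * p φ - Real.sin φ * pderiv p φ / lam) φ = Q φ :=
    fun φ hφ => (hQd φ hφ).derivWithin (uniqueDiffOn_Icc pi2_pos φ hφ)
  have hQcont : ContinuousOn Q (Set.Icc 0 (Real.pi/2)) := by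
    rw [hQdef]
    exact continuousOn_const.mul ((Real.continuous_cos.continuousOn.mul (contP hp)).add
      (continuousOn_const.mul (Real.continuous_sin.continuousOn.mul hp.1)))
  have hqcont : ContinuousOn (fun φ => Real.cos φ * p φ - Real.sin φ * pderiv p φ / lam)
      (Set.Icc 0 (Real.pi/2)) :=
    (Real.continuous_cos.continuousOn.mul hp.1).sub
      ((Real.continuous_sin.continuousOn.mul (contP hp)).div_const lam)
  have hqdiff : DifferentiableOn ℝ
      (fun φ => Real.cos φ * p φ - Real.sin φ * pderiv p φ / lam)
      (Set.Icc 0 (Real.pi/2)) := fun φ hφ => ((hQd φ hφ).differentiableWithinAt)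
  have hq1 : ContDiffOn ℝ 1 (fun φ => Real.cos φ * p φ - Real.sin φ * pderiv p φ / lam)
      (Set.Icc 0 (Real.pi/2)) := by
    have h := (contDiffOn_succ_iff_derivWithin (n := 0) (uniqueDiffOn_Icc pi2_pos)).2
      ⟨hqdiff, by simp, (contDiffOn_zero.2 hQcont).congr hqd_eq⟩
    norm_num at h
    exact h
  have hIocU : UniqueDiffOn ℝ (Set.Ioc (0:ℝ) (Real.pi/2)) := uniqueDiffOn_Ioc _ _
  have hsub : Set.Ioc (0:ℝ) (Real.pi/2) ⊆ Set.Icc 0 (Real.pi/2) := Set.Ioc_subset_Icc_self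
  have hqdIoc_eq : ∀ φ ∈ Set.Ioc (0:ℝ) (Real.pi/2),
      derivWithin (fun φ => Real.cos φ * p φ - Real.sin φ * pderiv p φ / lam)
        (Set.Ioc 0 (Real.pi/2)) φ = Q φ :=
    fun φ hφ => ((hQd φ (hsub hφ)).mono hsub).derivWithin (hIocU φ hφ)
  have hQC1 : ContDiffOn ℝ 1 Q (Set.Ioc 0 (Real.pi/2)) := by
    rw [hQdef]
    exact contDiffOn_const.mul ((Real.contDiff_cos.contDiffOn.mul (contDP hp)).add
      (contDiffOn_const.mul (Real.contDiff_sin.contDiffOn.mul (hp.2.1.mono hsub))))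
  have hq2 : ContDiffOn ℝ 2 (fun φ => Real.cos φ * p φ - Real.sin φ * pderiv p φ / lam)
      (Set.Ioc 0 (Real.pi/2)) := by
    have h := (contDiffOn_succ_iff_derivWithin (n := 1) hIocU).2
      ⟨fun φ hφ => ((hQd φ (hsub hφ)).mono hsub).differentiableWithinAt, by simp,
        hQC1.congr hqdIoc_eq⟩
    norm_num at h
    exact h
  have hODE : ∀ φ ∈ Set.Ioc (0:ℝ) (Real.pi/2),
      pderiv2 (fun φ => Real.cos φ * p φ - Real.sin φ * pderiv p φ / lam) φ
        + ((n:ℝ) - 2) * (Real.cos φ / Real.sin φ) *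
            pderiv (fun φ => Real.cos φ * p φ - Real.sin φ * pderiv p φ / lam) φ
        + (lam - 1) * ((lam - 1) + (n:ℝ) - 2) *
            (Real.cos φ * p φ - Real.sin φ * pderiv p φ / lam) = 0 := by
    intro φ hφ
    have hφI : φ ∈ Set.Icc (0:ℝ) (Real.pi/2) := hsub hφ
    have hsin : 0 < Real.sin φ := Real.sin_pos_of_pos_of_lt_pi hφ.1 (by linarith [hφ.2])
    have h1 : HasDerivWithinAt (fun x => Real.cos x * pderiv p x)
        (-Real.sin φ * pderiv p φ + Real.cos φ * pderiv2 p φ) (Set.Icc 0 (Real.pi/2)) φ :=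
      (Real.hasDerivAt_cos φ).hasDerivWithinAt.mul (hasD2 hp hφ)
    have h2 : HasDerivWithinAt (fun x => Real.sin x * p x)
        (Real.cos φ * p φ + Real.sin φ * pderiv p φ) (Set.Icc 0 (Real.pi/2)) φ :=
      (Real.hasDerivAt_sin φ).hasDerivWithinAt.mul (hasD hp hφI)
    have h3 := (h1.add (h2.const_mul lam)).const_mul ((lam + (n:ℝ) - 3)/lam)
    have h4 : HasDerivWithinAt
        (pderiv (fun φ => Real.cos φ * p φ - Real.sin φ * pderiv p φ / lam))
        (((lam + (n:ℝ) - 3)/lam) * ((-Real.sin φ * pderiv p φ + Real.cos φ * pderiv2 p φ)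
          + lam * (Real.cos φ * p φ + Real.sin φ * pderiv p φ))) (Set.Icc 0 (Real.pi/2)) φ := by
      refine HasDerivWithinAt.congr ?_ (fun y hy => hqd_eq y hy) (hqd_eq φ hφI)
      exact h3
    have hp2eq := h4.derivWithin (uniqueDiffOn_Icc pi2_pos φ hφI)
    rw [show pderiv2 (fun φ => Real.cos φ * p φ - Real.sin φ * pderiv p φ / lam) φ
        = derivWithin (pderiv (fun φ => Real.cos φ * p φ - Real.sin φ * pderiv p φ / lam))
            (Set.Icc 0 (Real.pi/2)) φ from rfl, hp2eq, hqd_eq φ hφI, hQdef]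
    have h := hode' φ hφ
    field_simp
    linear_combination (lam + (n:ℝ) - 3) * Real.cos φ * h
  have hq0 : Real.cos 0 * p 0 - Real.sin 0 * pderiv p 0 / lam = 1 := by
    simp [hp.2.2.2.2.1]
  have hq0' : pderiv (fun φ => Real.cos φ * p φ - Real.sin φ * pderiv p φ / lam) 0 = 0 := by
    rw [hqd_eq 0 h0mem, hQdef]
    simp [hp.2.2.2.2.2]
  refine ⟨⟨hqcont, hq1, hq2, hODE, hq0, hq0'⟩, ?_, ?_⟩
  · rw [Real.cos_pi_div_two, Real.sin_pi_div_two]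
    ring
  · rw [hqd_eq _ hπmem, hQdef]
    simp only [Real.cos_pi_div_two, Real.sin_pi_div_two, zero_mul, one_mul, zero_add]
    field_simp

lemma main_ind : ∀ k : ℕ, ∀ lam : ℝ, 0 < lam → lam ≤ (k:ℝ) → ∀ n : ℕ, 2 ≤ n →
    ∀ p : ℝ → ℝ, IsMeridianSol n lam p →
    Real.sign (p (Real.pi/2)) = Real.sign (Real.cos (lam * (Real.pi/2))) ∧
    Real.sign (pderiv p (Real.pi/2)) = Real.sign (-Real.sin (lam * (Real.pi/2))) := by
  intro k
  induction k with
  | zero =>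
    intro lam h1 h2
    exfalso
    simp only [Nat.cast_zero] at h2
    linarith
  | succ k ih =>
    intro lam hl0 hlk n hn p hp
    have hπ := Real.pi_pos
    have hn2 : (2:ℝ) ≤ (n:ℝ) := by exact_mod_cast hn
    rcases le_or_gt lam 1 with hle | hgt
    · have hb := base_concl hn hl0 hle hp
      rcases lt_or_eq_of_le hle with hlt | heq
      · have hcos : 0 < Real.cos (lam * (Real.pi/2)) :=
          Real.cos_pos_of_mem_Ioo ⟨by nlinarith, by nlinarith⟩
        have hsin : 0 < Real.sin (lam * (Real.pi/2)) :=
          Real.sin_pos_of_pos_of_lt_pi (by positivity) (by nlinarith)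
        constructor
        · rw [Real.sign_of_pos (hb.1 hlt), Real.sign_of_pos hcos]
        · rw [Real.sign_of_neg hb.2.2, Real.sign_of_neg (by linarith : -Real.sin (lam * (Real.pi/2)) < 0)]
      · subst heq
        constructor
        · rw [hb.2.1 rfl, show (1:ℝ) * (Real.pi/2) = Real.pi/2 by ring, Real.cos_pi_div_two,
            Real.sign_zero]
        · rw [Real.sign_of_neg hb.2.2, show (1:ℝ) * (Real.pi/2) = Real.pi/2 by ring,
            Real.sin_pi_div_two]
          rw [Real.sign_of_neg (by norm_num : (-1:ℝ) < 0)]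
    · have hstep := step hn hgt hp
      have hl0' : 0 < lam - 1 := by linarith
      have hlk' : lam - 1 ≤ (k:ℝ) := by
        push_cast at hlk
        linarith
      obtain ⟨ih1, ih2⟩ := ih (lam - 1) hl0' hlk' n hn _ hstep.1
      have e1 : Real.cos ((lam - 1) * (Real.pi/2)) = Real.sin (lam * (Real.pi/2)) := by
        rw [show (lam - 1) * (Real.pi/2) = lam * (Real.pi/2) - Real.pi/2 by ring,
          Real.cos_sub_pi_div_two]
      have e2 : -Real.sin ((lam - 1) * (Real.pi/2)) = Real.cos (lam * (Real.pi/2)) := by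
        rw [show (lam - 1) * (Real.pi/2) = lam * (Real.pi/2) - Real.pi/2 by ring,
          Real.sin_sub_pi_div_two]
        ring
      constructor
      · rw [hstep.2.2, e2] at ih2
        rw [← ih2, show (lam + (n:ℝ) - 3) * p (Real.pi/2)
            = (lam + (n:ℝ) - 3) * p (Real.pi/2) from rfl]
        rw [sign_mul_pos (by linarith : (0:ℝ) < lam + (n:ℝ) - 3)]
      · rw [hstep.2.1, e1] at ih1
        have hrw : -(pderiv p (Real.pi/2))/lam = (1/lam) * (-(pderiv p (Real.pi/2))) := by
          ring
        rw [hrw, sign_mul_pos (by positivity : (0:ℝ) < 1/lam), Real.sign_neg] at ih1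
        rw [Real.sign_neg]
        linarith [ih1]

end MeridianAux

/-- The signs of `p` and `p'` at `π/2` are those of `cos(λπ/2)` and `−sin(λπ/2)`. -/
theorem sign_of_meridian_sol_at_pi_div_two (n : ℕ) (hn : 2 ≤ n) (lam : ℝ) (hlam : 0 < lam)
    (p : ℝ → ℝ) (hp : IsMeridianSol n lam p) :
    Real.sign (p (Real.pi / 2)) = Real.sign (Real.cos (lam * (Real.pi / 2))) ∧
    Real.sign (pderiv p (Real.pi / 2)) = Real.sign (-Real.sin (lam * (Real.pi / 2))) :=
  MeridianAux.main_ind ⌈lam⌉₊ lam hlam (Nat.le_ceil lam) n hn p hp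
end

section
/- Let n ≥ 2 be an integer, let λ > 0, and let p be any function as in the context. If 0 < φ₁ < φ₂ ≤ π/2 are consecutive critical points of p, i.e. p'(φ₁) = p'(φ₂) = 0 and p'(φ) ≠ 0 for all φ ∈ (φ₁, φ₂), then p(φ₁)·p(φ₂) < 0; in particular p changes sign, and hence has a zero, strictly between any two consecutive critical points. -/
open Real Set

/-- A continuous function nonvanishing on an open interval has constant sign there. -/
private lemma sign_helper {f : ℝ → ℝ} {a b : ℝ} (hab : a < b)
    (hf : ContinuousOn f (Icc a b)) (hne : ∀ x ∈ Ioo a b, f x ≠ 0) :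
    (∀ x ∈ Ioo a b, 0 < f x) ∨ (∀ x ∈ Ioo a b, f x < 0) := by
  set m := (a + b) / 2 with hm
  have hmem : m ∈ Ioo a b := ⟨by simp only [hm]; linarith, by simp only [hm]; linarith⟩
  rcases (hne m hmem).lt_or_gt with hneg | hpos
  · right
    intro x hx
    by_contra hcon
    have hxpos : 0 < f x := (hne x hx).lt_or_gt.resolve_left hcon
    rcases lt_trichotomy x m with h | h | h
    · obtain ⟨y, hy, hy0⟩ := intermediate_value_Ioo' h.le
        (hf.mono (Icc_subset_Icc hx.1.le hmem.2.le))
        (show (0:ℝ) ∈ Ioo (f m) (f x) from ⟨hneg, hxpos⟩)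
      exact hne y ⟨hx.1.trans hy.1, hy.2.trans hmem.2⟩ hy0
    · rw [h] at hxpos; linarith
    · obtain ⟨y, hy, hy0⟩ := intermediate_value_Ioo h.le
        (hf.mono (Icc_subset_Icc hmem.1.le hx.2.le))
        (show (0:ℝ) ∈ Ioo (f m) (f x) from ⟨hneg, hxpos⟩)
      exact hne y ⟨hmem.1.trans hy.1, hy.2.trans hx.2⟩ hy0
  · left
    intro x hx
    by_contra hcon
    have hxneg : f x < 0 := (hne x hx).lt_or_gt.resolve_right (by
      intro h; exact hcon h)
    rcases lt_trichotomy x m with h | h | h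
    · obtain ⟨y, hy, hy0⟩ := intermediate_value_Ioo h.le
        (hf.mono (Icc_subset_Icc hx.1.le hmem.2.le))
        (show (0:ℝ) ∈ Ioo (f x) (f m) from ⟨hxneg, hpos⟩)
      exact hne y ⟨hx.1.trans hy.1, hy.2.trans hmem.2⟩ hy0
    · rw [h] at hxneg; linarith
    · obtain ⟨y, hy, hy0⟩ := intermediate_value_Ioo' h.le
        (hf.mono (Icc_subset_Icc hmem.1.le hx.2.le))
        (show (0:ℝ) ∈ Ioo (f x) (f m) from ⟨hxneg, hpos⟩)
      exact hne y ⟨hmem.1.trans hy.1, hy.2.trans hx.2⟩ hy0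

/-- Main analytic lemma: if the solution is strictly increasing between two critical
points, then it is negative at the first and positive at the second. -/
private lemma aux_pos {μ : ℝ} (hμ : 0 < μ) (k : ℕ) {p p' p'' : ℝ → ℝ} {φ₁ φ₂ : ℝ}
    (h1 : 0 < φ₁) (h12 : φ₁ < φ₂) (h2 : φ₂ ≤ Real.pi / 2)
    (hpc : ContinuousOn p (Icc φ₁ φ₂)) (hp'c : ContinuousOn p' (Icc φ₁ φ₂))
    (hp : ∀ x ∈ Ioo φ₁ φ₂, HasDerivAt p (p' x) x)
    (hp' : ∀ x ∈ Ioo φ₁ φ₂, HasDerivAt p' (p'' x) x)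
    (ode : ∀ x ∈ Ioo φ₁ φ₂,
      p'' x + (k : ℝ) * (Real.cos x / Real.sin x) * p' x + μ * p x = 0)
    (hc1 : p' φ₁ = 0) (hc2 : p' φ₂ = 0)
    (hpos : ∀ x ∈ Ioo φ₁ φ₂, 0 < p' x) :
    p φ₁ < 0 ∧ 0 < p φ₂ := by
  have hsin : ∀ x ∈ Icc φ₁ φ₂, 0 < Real.sin x := by
    intro x hx
    refine Real.sin_pos_of_pos_of_lt_pi (h1.trans_le hx.1) ?_
    have := Real.pi_pos
    linarith [hx.2.trans h2]
  set q : ℝ → ℝ := fun x => Real.sin x ^ k * p' x with hqdef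
  have hqc : ContinuousOn q (Icc φ₁ φ₂) :=
    (Real.continuous_sin.pow k).continuousOn.mul hp'c
  have hq : ∀ x ∈ Ioo φ₁ φ₂,
      HasDerivAt q (-(μ * (Real.sin x ^ k * p x))) x := by
    intro x hx
    have hder := ((Real.hasDerivAt_sin x).pow k).mul (hp' x hx)
    have hsx : Real.sin x ≠ 0 := (hsin x (Ioo_subset_Icc_self hx)).ne'
    have hode := ode x hx
    have hpp : p'' x = -((k:ℝ) * (Real.cos x / Real.sin x) * p' x) - μ * p x := by
      linarith
    refine hder.congr_deriv ?_
    symm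
    rw [hpp]
    cases k with
    | zero => simp
    | succ m =>
      have hps : Real.sin x ^ (m + 1) = Real.sin x ^ m * Real.sin x := pow_succ _ _
      simp only [Nat.add_sub_cancel, Nat.cast_add, Nat.cast_one, Pi.pow_apply]
      field_simp
      ring
  have hmono : StrictMonoOn p (Icc φ₁ φ₂) := by
    apply strictMonoOn_of_deriv_pos (convex_Icc _ _) hpc
    intro x hx
    rw [interior_Icc] at hx
    rw [(hp x hx).deriv]
    exact hpos x hx
  have hmem1 : φ₁ ∈ Icc φ₁ φ₂ := left_mem_Icc.2 h12.le
  have hmem2 : φ₂ ∈ Icc φ₁ φ₂ := right_mem_Icc.2 h12.le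
  constructor
  · by_contra hcon
    push_neg at hcon
    have hppos : ∀ x ∈ Ioo φ₁ φ₂, 0 < p x := fun x hx =>
      lt_of_le_of_lt hcon (hmono hmem1 (Ioo_subset_Icc_self hx) hx.1)
    have hanti : StrictAntiOn q (Icc φ₁ φ₂) := by
      apply strictAntiOn_of_deriv_neg (convex_Icc _ _) hqc
      intro x hx
      rw [interior_Icc] at hx
      rw [(hq x hx).deriv]
      have h1' := hsin x (Ioo_subset_Icc_self hx)
      have h2' := hppos x hx
      have : 0 < μ * (Real.sin x ^ k * p x) := by positivity
      linarith
    have := hanti hmem1 hmem2 h12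
    simp only [hqdef, hc1, hc2, mul_zero] at this
    exact lt_irrefl _ this
  · by_contra hcon
    push_neg at hcon
    have hpneg : ∀ x ∈ Ioo φ₁ φ₂, p x < 0 := fun x hx =>
      lt_of_lt_of_le (hmono (Ioo_subset_Icc_self hx) hmem2 hx.2) hcon
    have hmonoq : StrictMonoOn q (Icc φ₁ φ₂) := by
      apply strictMonoOn_of_deriv_pos (convex_Icc _ _) hqc
      intro x hx
      rw [interior_Icc] at hx
      rw [(hq x hx).deriv]
      have h1' := hsin x (Ioo_subset_Icc_self hx)
      have h2' := hpneg x hx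
      have hk : (0:ℝ) < Real.sin x ^ k := pow_pos h1' k
      have : μ * (Real.sin x ^ k * p x) < 0 :=
        mul_neg_of_pos_of_neg hμ (mul_neg_of_pos_of_neg hk h2')
      linarith
    have := hmonoq hmem1 hmem2 h12
    simp only [hqdef, hc1, hc2, mul_zero] at this
    exact lt_irrefl _ this

/-- Between two consecutive critical points of `p`, `p` changes sign, hence has a zero. -/
theorem meridian_sol_sign_change_between_critical_points (n : ℕ) (hn : 2 ≤ n)
    (lam : ℝ) (hlam : 0 < lam) (p : ℝ → ℝ) (hp : IsMeridianSol n lam p)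
    (φ₁ φ₂ : ℝ) (h1 : 0 < φ₁) (h12 : φ₁ < φ₂) (h2 : φ₂ ≤ Real.pi / 2)
    (hc1 : pderiv p φ₁ = 0) (hc2 : pderiv p φ₂ = 0)
    (hcons : ∀ φ ∈ Set.Ioo φ₁ φ₂, pderiv p φ ≠ 0) :
    p φ₁ * p φ₂ < 0 ∧ ∃ φ ∈ Set.Ioo φ₁ φ₂, p φ = 0 := by
  obtain ⟨hcont, hC1, hC2, hode, -, -⟩ := hp
  have hpihalf : (0:ℝ) < Real.pi / 2 := by linarith [Real.pi_pos]
  have hsubI : Icc φ₁ φ₂ ⊆ Icc 0 (Real.pi / 2) := Icc_subset_Icc h1.le h2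
  have hIoosub : Ioo φ₁ φ₂ ⊆ Ioo 0 (Real.pi / 2) := fun x hx =>
    ⟨h1.trans hx.1, lt_of_lt_of_le hx.2 h2⟩
  have hud : UniqueDiffOn ℝ (Icc (0:ℝ) (Real.pi / 2)) := uniqueDiffOn_Icc hpihalf
  have hp'c : ContinuousOn (pderiv p) (Icc 0 (Real.pi / 2)) :=
    hC1.continuousOn_derivWithin hud le_rfl
  have hdp : ∀ x ∈ Ioo φ₁ φ₂, HasDerivAt p (pderiv p x) x := by
    intro x hx
    have hx' : x ∈ Ioo (0:ℝ) (Real.pi / 2) := hIoosub hx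
    exact ((hC1.differentiableOn one_ne_zero x
      (hsubI (Ioo_subset_Icc_self hx))).hasDerivWithinAt).hasDerivAt
      (Icc_mem_nhds hx'.1 hx'.2)
  set t := Ioc (0:ℝ) (Real.pi / 2) with ht
  have hudt : UniqueDiffOn ℝ t := uniqueDiffOn_Ioc _ _
  have hEqset : ∀ x : ℝ, 0 < x → Icc (0:ℝ) (Real.pi / 2) =ᶠ[nhds x] t := by
    intro x hx
    rw [Filter.eventuallyEq_set]
    filter_upwards [eventually_gt_nhds hx] with y hy
    simp [ht, Set.mem_Icc, Set.mem_Ioc, hy, hy.le]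
  have hEq : ∀ y ∈ t, pderiv p y = derivWithin p t y := fun y hy =>
    derivWithin_congr_set (hEqset y hy.1)
  have hgC1 : ContDiffOn ℝ 1 (derivWithin p t) t :=
    hC2.derivWithin hudt (by norm_num)
  have hdp' : ∀ x ∈ Ioo φ₁ φ₂, HasDerivAt (pderiv p) (pderiv2 p x) x := by
    intro x hx
    have hx' : x ∈ Ioo (0:ℝ) (Real.pi / 2) := hIoosub hx
    have hxt : x ∈ t := ⟨hx'.1, hx'.2.le⟩
    have hnb : t ∈ nhds x :=
      mem_nhds_iff.2 ⟨Ioo 0 (Real.pi / 2), Ioo_subset_Ioc_self, isOpen_Ioo, hx'⟩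
    have hder : HasDerivAt (derivWithin p t) (derivWithin (derivWithin p t) t x) x :=
      ((hgC1.differentiableOn one_ne_zero x hxt).hasDerivWithinAt).hasDerivAt hnb
    have heq2 : pderiv p =ᶠ[nhds x] derivWithin p t := by
      filter_upwards [hnb] with y hy using hEq y hy
    have hval : pderiv2 p x = derivWithin (derivWithin p t) t x := by
      unfold pderiv2
      rw [derivWithin_congr_set (hEqset x hx'.1)]
      exact derivWithin_congr hEq (hEq x hxt)
    rw [hval]
    exact hder.congr_of_eventuallyEq heq2
  set μ := lam * (lam + (n:ℝ) - 2) with hμdef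
  have hn2 : (2:ℝ) ≤ (n:ℝ) := by exact_mod_cast hn
  have hμ : 0 < μ := mul_pos hlam (by linarith)
  have hk : ((n - 2 : ℕ) : ℝ) = (n:ℝ) - 2 := by
    rw [Nat.cast_sub hn]; norm_num
  have ode' : ∀ x ∈ Ioo φ₁ φ₂,
      pderiv2 p x + ((n - 2 : ℕ) : ℝ) * (Real.cos x / Real.sin x) * pderiv p x
        + μ * p x = 0 := by
    intro x hx
    rw [hk]
    have := hode x ⟨h1.trans hx.1, hx.2.le.trans h2⟩
    linarith
  rcases sign_helper h12 (hp'c.mono hsubI) hcons with hsgn | hsgn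
  · obtain ⟨ha, hb⟩ := aux_pos hμ (n - 2) h1 h12 h2 (hcont.mono hsubI)
      (hp'c.mono hsubI) hdp hdp' ode' hc1 hc2 hsgn
    refine ⟨mul_neg_of_neg_of_pos ha hb, ?_⟩
    obtain ⟨φ, hφ, h0⟩ := intermediate_value_Ioo h12.le (hcont.mono hsubI)
      (show (0:ℝ) ∈ Ioo (p φ₁) (p φ₂) from ⟨ha, hb⟩)
    exact ⟨φ, hφ, h0⟩
  · obtain ⟨ha, hb⟩ := aux_pos hμ (n - 2) h1 h12 h2 ((hcont.mono hsubI).neg)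
      ((hp'c.mono hsubI).neg)
      (fun x hx => (hdp x hx).neg)
      (fun x hx => (hdp' x hx).neg)
      (fun x hx => by have := ode' x hx; simp only [Pi.neg_apply]; linarith)
      (by simp [hc1]) (by simp [hc2])
      (fun x hx => by simpa using hsgn x hx)
    have ha' : 0 < p φ₁ := by simp only [Pi.neg_apply] at ha; linarith
    have hb' : p φ₂ < 0 := by simp only [Pi.neg_apply] at hb; linarith
    refine ⟨mul_neg_of_pos_of_neg ha' hb', ?_⟩
    obtain ⟨φ, hφ, h0⟩ := intermediate_value_Ioo' h12.le (hcont.mono hsubI)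
      (show (0:ℝ) ∈ Ioo (p φ₂) (p φ₁) from ⟨hb', ha'⟩)
    exact ⟨φ, hφ, h0⟩
end

section
/- Let n ≥ 2 be an integer and let 0 < λ < λ' be real numbers. Let p be a function as in the context for the parameter λ, and q a function as in the context for the parameter λ'. If φ₁ ∈ (0, π/2] is the first zero of p, i.e. p(φ₁) = 0 and p(φ) > 0 for all φ ∈ [0, φ₁), then q has a zero in the open interval (0, φ₁). -/
open Real Set Filter Topology

/-- At interior points, `pderiv` is a true derivative and `pderiv` has derivative `pderiv2`. -/
lemma meridian_interior_derivs (n : ℕ) (lam : ℝ) (p : ℝ → ℝ)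
    (hp : IsMeridianSol n lam p) {x : ℝ} (hx : x ∈ Set.Ioo 0 (Real.pi / 2)) :
    HasDerivAt p (pderiv p x) x ∧ HasDerivAt (pderiv p) (pderiv2 p x) x := by
  obtain ⟨hpc, hp1, hp2, _, _, _⟩ := hp
  have hnhds : Set.Icc (0:ℝ) (π/2) ∈ 𝓝 x := Icc_mem_nhds hx.1 hx.2
  have hEqP : pderiv p =ᶠ[𝓝 x] deriv p := by
    filter_upwards [isOpen_Ioo.mem_nhds hx] with y hy
    simp only [pderiv]
    exact derivWithin_of_mem_nhds (Icc_mem_nhds hy.1 hy.2)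
  constructor
  · have h1 : DifferentiableAt ℝ p x := (hp1.differentiableOn one_ne_zero).differentiableAt hnhds
    have h2 : pderiv p x = deriv p x := derivWithin_of_mem_nhds hnhds
    rw [h2]
    exact h1.hasDerivAt
  · have h2 : ContDiffOn ℝ 1 (deriv p) (Set.Ioo 0 (π/2)) :=
      (hp2.mono Set.Ioo_subset_Ioc_self).deriv_of_isOpen isOpen_Ioo (by norm_num)
    have h3 : DifferentiableAt ℝ (deriv p) x :=
      (h2.differentiableOn one_ne_zero).differentiableAt (isOpen_Ioo.mem_nhds hx)
    have h4 : pderiv2 p x = deriv (deriv p) x := by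
      simp only [pderiv2]
      rw [derivWithin_of_mem_nhds hnhds]
      exact hEqP.deriv_eq
    rw [h4]
    exact h3.hasDerivAt.congr_of_eventuallyEq hEqP


lemma pow_sin_deriv_eq (k : ℕ) {x : ℝ} (hs : Real.sin x ≠ 0) :
    (k:ℝ) * Real.sin x ^ (k-1) * Real.cos x
      = (k:ℝ) * (Real.cos x / Real.sin x) * Real.sin x ^ k := by
  rcases Nat.eq_zero_or_pos k with hk0 | hkp
  · simp [hk0]
  · obtain ⟨m, rfl⟩ : ∃ m, k = m + 1 := ⟨k - 1, (Nat.succ_pred_eq_of_pos hkp).symm⟩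
    field_simp
    simp [Nat.add_sub_cancel_left]
    ring

/-- The solution `q` with the larger parameter `λ'` vanishes somewhere before the first
zero of `p`. -/
theorem meridian_sol_zero_before_first_zero_of_lower_parameter (n : ℕ) (hn : 2 ≤ n)
    (lam lam' : ℝ) (hlam : 0 < lam) (hll : lam < lam')
    (p q : ℝ → ℝ) (hp : IsMeridianSol n lam p) (hq : IsMeridianSol n lam' q)
    (φ₁ : ℝ) (hφ₁ : φ₁ ∈ Set.Ioc 0 (Real.pi / 2)) (hz : p φ₁ = 0)
    (hpos : ∀ φ ∈ Set.Ico 0 φ₁, 0 < p φ) :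
    ∃ φ ∈ Set.Ioo 0 φ₁, q φ = 0 := by
  obtain ⟨ha0, haπ⟩ := hφ₁
  by_contra hcon
  push_neg at hcon
  have hπ2 : (0:ℝ) < π/2 := by positivity
  have hn2 : (2:ℝ) ≤ (n:ℝ) := by exact_mod_cast hn
  have hkcast : ((n:ℝ) - 2) = ((n - 2 : ℕ) : ℝ) := by
    rw [Nat.cast_sub hn]; norm_num
  set k : ℕ := n - 2 with hkdef
  obtain ⟨hpc, hp1, hp2, hpode, hp0, hp'0⟩ := hp
  obtain ⟨hqc, hq1, hq2, hqode, hq0, hq'0⟩ := hq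
  -- `q` is nonnegative on `[0, φ₁]`
  have hqnn : ∀ t ∈ Set.Icc 0 φ₁, 0 ≤ q t := by
    intro t ht
    by_contra hlt
    push_neg at hlt
    have hcont : ContinuousOn q (Set.Icc 0 t) :=
      hqc.mono (Set.Icc_subset_Icc le_rfl (le_trans ht.2 haπ))
    have h0 : (0:ℝ) ∈ Set.Icc (q t) (q 0) := ⟨hlt.le, by rw [hq0]; norm_num⟩
    obtain ⟨c, hc, hc0⟩ := intermediate_value_Icc' ht.1 hcont h0
    have hcne0 : c ≠ 0 := by rintro rfl; rw [hq0] at hc0; norm_num at hc0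
    have hcnet : c ≠ t := by rintro rfl; rw [hc0] at hlt; norm_num at hlt
    have hclt : c < t := lt_of_le_of_ne hc.2 hcnet
    exact hcon c ⟨lt_of_le_of_ne hc.1 (Ne.symm hcne0), lt_of_lt_of_le hclt ht.2⟩ hc0
  have hqpos : ∀ t ∈ Set.Ioo 0 φ₁, 0 < q t := fun t ht =>
    (hqnn t ⟨ht.1.le, ht.2.le⟩).lt_of_ne (fun h => hcon t ht h.symm)
  -- `pderiv p φ₁ ≤ 0`
  have hPa : pderiv p φ₁ ≤ 0 := by
    have hmem : φ₁ ∈ Set.Icc (0:ℝ) (π/2) := ⟨ha0.le, haπ⟩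
    have hD : HasDerivWithinAt p (pderiv p φ₁) (Set.Icc 0 (π/2)) φ₁ :=
      ((hp1.differentiableOn one_ne_zero) φ₁ hmem).hasDerivWithinAt
    have hD' : HasDerivWithinAt p (pderiv p φ₁) (Set.Ioo 0 φ₁) φ₁ :=
      hD.mono (fun y hy => ⟨hy.1.le, hy.2.le.trans haπ⟩)
    have hslope := (hasDerivWithinAt_iff_tendsto_slope' (by simp : φ₁ ∉ Set.Ioo 0 φ₁)).1 hD'
    haveI : (𝓝[Set.Ioo (0:ℝ) φ₁] φ₁).NeBot := by
      apply mem_closure_iff_nhdsWithin_neBot.mp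
      rw [closure_Ioo ha0.ne]
      exact right_mem_Icc.2 ha0.le
    refine le_of_tendsto hslope ?_
    filter_upwards [self_mem_nhdsWithin] with y hy
    have hpy : 0 < p y := hpos y ⟨hy.1.le, hy.2⟩
    have : slope p φ₁ y = p y / (y - φ₁) := by
      rw [slope_def_field, hz]; ring_nf
    rw [this]
    exact le_of_lt (div_neg_of_pos_of_neg hpy (by linarith [hy.2]))
  -- the weighted Wronskian
  set W : ℝ → ℝ := fun y => Real.sin y ^ k * (p y * pderiv q y - q y * pderiv p y) with hWdef
  set mu : ℝ := lam * (lam + (n:ℝ) - 2) with hmu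
  set mu' : ℝ := lam' * (lam' + (n:ℝ) - 2) with hmu'
  have hmult : mu < mu' := by
    rw [hmu, hmu']
    nlinarith [mul_pos (sub_pos.2 hll) (show (0:ℝ) < lam' + lam + ((n:ℝ) - 2) by linarith)]
  -- derivative of W at interior points
  have key : ∀ x ∈ Set.Ioo (0:ℝ) φ₁,
      HasDerivAt W (-((mu' - mu) * Real.sin x ^ k * p x * q x)) x := by
    intro x hx
    have hx1 : 0 < x := hx.1
    have hx2 : x < π/2 := lt_of_lt_of_le hx.2 haπ
    have hxIoo : x ∈ Set.Ioo (0:ℝ) (π/2) := ⟨hx1, hx2⟩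
    have hsinpos : 0 < Real.sin x :=
      Real.sin_pos_of_pos_of_lt_pi hx1 (by linarith [Real.pi_pos])
    obtain ⟨hdp, hdP⟩ := meridian_interior_derivs n lam p ⟨hpc, hp1, hp2, hpode, hp0, hp'0⟩ hxIoo
    obtain ⟨hdq, hdQ⟩ := meridian_interior_derivs n lam' q ⟨hqc, hq1, hq2, hqode, hq0, hq'0⟩ hxIoo
    have hodeP := hpode x ⟨hx1, hx2.le⟩
    have hodeQ := hqode x ⟨hx1, hx2.le⟩
    have hw : HasDerivAt (fun y => Real.sin y ^ k)
        ((k:ℝ) * Real.sin x ^ (k-1) * Real.cos x) x := (Real.hasDerivAt_sin x).pow k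
    have hB : HasDerivAt (fun y => p y * pderiv q y - q y * pderiv p y)
        (pderiv p x * pderiv q x + p x * pderiv2 q x
          - (pderiv q x * pderiv p x + q x * pderiv2 p x)) x :=
      (hdp.mul hdQ).sub (hdq.mul hdP)
    have hW0 := hw.mul hB
    have hkpow : (k:ℝ) * Real.sin x ^ (k-1) * Real.cos x
        = ((n:ℝ) - 2) * (Real.cos x / Real.sin x) * Real.sin x ^ k := by
      rw [hkcast]
      exact pow_sin_deriv_eq k hsinpos.ne'
    have e1 : pderiv2 p x
        = -(((n:ℝ)-2) * (Real.cos x / Real.sin x) * pderiv p x + mu * p x) := by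
      linarith [hodeP]
    have e2 : pderiv2 q x
        = -(((n:ℝ)-2) * (Real.cos x / Real.sin x) * pderiv q x + mu' * q x) := by
      linarith [hodeQ]
    have hval : (k:ℝ) * Real.sin x ^ (k-1) * Real.cos x * (p x * pderiv q x - q x * pderiv p x)
          + Real.sin x ^ k * (pderiv p x * pderiv q x + p x * pderiv2 q x
            - (pderiv q x * pderiv p x + q x * pderiv2 p x))
        = -((mu' - mu) * Real.sin x ^ k * p x * q x) := by
      rw [hkpow, e1, e2]
      ring
    rw [hWdef]
    exact hval ▸ hW0
  -- continuity of W
  have hsub : Set.Icc (0:ℝ) φ₁ ⊆ Set.Icc 0 (π/2) := Set.Icc_subset_Icc le_rfl haπ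
  have hPc : ContinuousOn (pderiv p) (Set.Icc 0 (π/2)) :=
    hp1.continuousOn_derivWithin (uniqueDiffOn_Icc hπ2) le_rfl
  have hQc : ContinuousOn (pderiv q) (Set.Icc 0 (π/2)) :=
    hq1.continuousOn_derivWithin (uniqueDiffOn_Icc hπ2) le_rfl
  have hWcont : ContinuousOn W (Set.Icc 0 φ₁) := by
    rw [hWdef]
    exact ((Real.continuous_sin.pow k).continuousOn).mul
      (((hpc.mono hsub).mul (hQc.mono hsub)).sub ((hqc.mono hsub).mul (hPc.mono hsub)))
  -- W is strictly decreasing on [0, φ₁]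
  have hanti : StrictAntiOn W (Set.Icc 0 φ₁) := by
    apply strictAntiOn_of_deriv_neg (convex_Icc 0 φ₁) hWcont
    intro x hx
    rw [interior_Icc] at hx
    rw [(key x hx).deriv]
    have hppos := hpos x ⟨hx.1.le, hx.2⟩
    have hqx := hqpos x hx
    have hsin : 0 < Real.sin x :=
      Real.sin_pos_of_pos_of_lt_pi hx.1 (by linarith [Real.pi_pos, haπ, hx.2])
    have hprod : 0 < (mu' - mu) * Real.sin x ^ k * p x * q x :=
      mul_pos (mul_pos (mul_pos (sub_pos.2 hmult) (pow_pos hsin k)) hppos) hqx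
    linarith
  have hW0 : W 0 = 0 := by
    rw [hWdef]
    simp [hp0, hq0, hp'0, hq'0]
  have hWa : 0 ≤ W φ₁ := by
    have hsa : 0 < Real.sin φ₁ :=
      Real.sin_pos_of_pos_of_lt_pi ha0 (by linarith [Real.pi_pos])
    have hqa : 0 ≤ q φ₁ := hqnn φ₁ ⟨ha0.le, le_rfl⟩
    have h1 : q φ₁ * pderiv p φ₁ ≤ 0 := mul_nonpos_of_nonneg_of_nonpos hqa hPa
    have hW1 : W φ₁ = Real.sin φ₁ ^ k * (0 - q φ₁ * pderiv p φ₁) := by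
      rw [hWdef]; simp only [hz]; ring
    rw [hW1]
    nlinarith [pow_pos hsa k]
  have hlt : W φ₁ < W 0 :=
    hanti (Set.left_mem_Icc.2 ha0.le) (Set.right_mem_Icc.2 ha0.le) ha0
  rw [hW0] at hlt
  linarith
end

section
/- Let n ≥ 2 be an integer, let λ > 0, and let p be any function as in the context. Then p(π/2) = 0 if and only if λ is an odd positive integer (i.e. λ = 2m + 1 for some natural number m). -/
open Real Set

open Polynomial

/-- Coefficients of the odd polynomial solution of the Gegenbauer-type ODE
`(1-x²)y'' - (n-1)xy' + μ y = 0` with `μ = (2m+1)(2m+n-1)`: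
`y = ∑ acoef n m j • x^(2j+1)`. -/
noncomputable def acoef (n m : ℕ) : ℕ → ℝ
  | 0 => 1
  | j+1 => acoef n m j *
      ((2*(j:ℝ)+1)*(2*(j:ℝ)+(n:ℝ)-1) - (2*(m:ℝ)+1)*(2*(m:ℝ)+(n:ℝ)-1)) /
      ((2*(j:ℝ)+2)*(2*(j:ℝ)+3))

lemma acoef_zero (n m : ℕ) : acoef n m 0 = 1 := rfl

lemma acoef_succ (n m j : ℕ) : acoef n m (j+1) = acoef n m j *
      ((2*(j:ℝ)+1)*(2*(j:ℝ)+(n:ℝ)-1) - (2*(m:ℝ)+1)*(2*(m:ℝ)+(n:ℝ)-1)) /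
      ((2*(j:ℝ)+2)*(2*(j:ℝ)+3)) := rfl

lemma acoef_eq_zero_of_lt (n m : ℕ) : ∀ j, m < j → acoef n m j = 0 := by
  intro j hj
  induction j with
  | zero => omega
  | succ k ih =>
    rcases Nat.lt_or_ge m k with h | h
    · rw [acoef_succ, ih h]; ring
    · have : m = k := by omega
      subst this
      rw [acoef_succ]; ring

lemma acoef_ne_zero (n m : ℕ) (hn : 2 ≤ n) : ∀ j, j ≤ m → acoef n m j ≠ 0 := by
  intro j hj
  induction j with
  | zero => simp [acoef_zero]
  | succ k ih =>
    have hk : k ≤ m := by omega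
    have hkm : k < m := by omega
    have h1 : acoef n m k ≠ 0 := ih hk
    rw [acoef_succ]
    have hkR : (k:ℝ) < (m:ℝ) := by exact_mod_cast hkm
    have hnR : (2:ℝ) ≤ (n:ℝ) := by exact_mod_cast hn
    have hnum : (2*(k:ℝ)+1)*(2*(k:ℝ)+(n:ℝ)-1) - (2*(m:ℝ)+1)*(2*(m:ℝ)+(n:ℝ)-1) ≠ 0 := by
      nlinarith [hkR, hnR, Nat.cast_nonneg (α := ℝ) k, Nat.cast_nonneg (α := ℝ) m]
    have hden : ((2*(k:ℝ)+2)*(2*(k:ℝ)+3)) ≠ 0 := by positivity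
    exact div_ne_zero (mul_ne_zero h1 hnum) hden

/-- The odd polynomial solution. -/
noncomputable def ypoly (n m : ℕ) : Polynomial ℝ :=
  ∑ j ∈ Finset.range (m+1), C (acoef n m j) * X^(2*j+1)

lemma coeff_ypoly_odd (n m j : ℕ) : (ypoly n m).coeff (2*j+1) = acoef n m j := by
  rw [ypoly, finset_sum_coeff]
  have : ∀ i ∈ Finset.range (m+1),
      (C (acoef n m i) * X ^ (2*i+1)).coeff (2*j+1) = if i = j then acoef n m i else 0 := by
    intro i _
    rw [coeff_C_mul, coeff_X_pow]
    by_cases h : i = j <;> simp [h] <;> omega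
  rw [Finset.sum_congr rfl this, Finset.sum_ite_eq' (Finset.range (m+1)) j (fun i => acoef n m i)]
  by_cases h : j ∈ Finset.range (m+1)
  · simp [h]
  · rw [if_neg h, acoef_eq_zero_of_lt n m j (by simpa using h)]

lemma coeff_ypoly_even (n m j : ℕ) : (ypoly n m).coeff (2*j) = 0 := by
  rw [ypoly, finset_sum_coeff]
  apply Finset.sum_eq_zero
  intro i _
  rw [coeff_C_mul, coeff_X_pow, if_neg (by omega)]
  ring

lemma coeff_mul_X' (p : Polynomial ℝ) (k : ℕ) :
    (p * X).coeff k = if 1 ≤ k then p.coeff (k-1) else 0 := by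
  rw [← pow_one (X : Polynomial ℝ), coeff_mul_X_pow']

/-- The Gegenbauer-type ODE as a polynomial identity (rearranged without subtraction). -/
lemma ypoly_ode_poly (n m : ℕ) :
    derivative (derivative (ypoly n m))
      + C ((2*(m:ℝ)+1)*(2*(m:ℝ)+(n:ℝ)-1)) * ypoly n m
    = derivative (derivative (ypoly n m)) * X^2
      + C ((n:ℝ)-1) * (derivative (ypoly n m) * X) := by
  ext k
  simp only [coeff_add, coeff_C_mul, coeff_derivative, coeff_mul_X_pow', coeff_mul_X']
  rcases Nat.even_or_odd k with ⟨j, hj⟩ | ⟨j, hj⟩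
  · subst hj
    have h1 : (ypoly n m).coeff (j+j+1+1) = 0 := by
      have := coeff_ypoly_even n m (j+1); rw [show 2*(j+1) = j+j+1+1 by ring] at this
      exact this
    have h2 : (ypoly n m).coeff (j+j) = 0 := by
      have := coeff_ypoly_even n m j; rw [show 2*j = j+j by ring] at this; exact this
    rcases Nat.eq_zero_or_pos j with rfl | hj0
    · simp [h1, h2]
    · rw [if_pos (by omega), if_pos (by omega)]
      have h3 : (ypoly n m).coeff (j+j-2+1+1) = 0 := by
        have := coeff_ypoly_even n m (j-1+1)
        rw [show 2*(j-1+1) = j+j-2+1+1 by omega] at this; exact this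
      have h4 : (ypoly n m).coeff (j+j-1+1) = 0 := by
        have := coeff_ypoly_even n m j
        rw [show 2*j = j+j-1+1 by omega] at this; exact this
      rw [h1, h2, h3, h4]; ring
  · subst hj
    have hk1 : (ypoly n m).coeff (2*j+1+1+1) = acoef n m (j+1) := by
      have := coeff_ypoly_odd n m (j+1); rw [show 2*(j+1)+1 = 2*j+1+1+1 by ring] at this
      exact this
    have hk2 : (ypoly n m).coeff (2*j+1) = acoef n m j := coeff_ypoly_odd n m j
    rcases Nat.eq_zero_or_pos j with rfl | hj0
    · -- k = 1
      rw [if_neg (by norm_num), if_pos (by norm_num)]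
      norm_num [hk1, hk2, acoef_succ, acoef_zero]
      ring
    · obtain ⟨i, rfl⟩ : ∃ i, j = i + 1 := ⟨j-1, by omega⟩
      rw [if_pos (by omega), if_pos (by omega)]
      have hk3 : (ypoly n m).coeff (2*(i+1)+1-2+1+1) = acoef n m (i+1) := by
        rw [show 2*(i+1)+1-2+1+1 = 2*(i+1)+1 by omega]; exact hk2
      have hk4 : (ypoly n m).coeff (2*(i+1)+1-1+1) = acoef n m (i+1) := by
        rw [show 2*(i+1)+1-1+1 = 2*(i+1)+1 by omega]; exact hk2
      rw [hk1, hk2, hk3, hk4,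
        show 2*(i+1)+1-2+1 = 2*i+2 by omega, show 2*(i+1)+1-2 = 2*i+1 by omega,
        show 2*(i+1)+1-1 = 2*i+2 by omega,
        show i+1+1 = i+2 from rfl, acoef_succ n m (i+1)]
      push_cast
      field_simp
      ring

/-- Functional form of the ODE identity. -/
lemma ypoly_ode (n m : ℕ) (x : ℝ) :
    (1 - x^2) * eval x (derivative (derivative (ypoly n m)))
      - ((n:ℝ)-1) * x * eval x (derivative (ypoly n m))
      + (2*(m:ℝ)+1)*(2*(m:ℝ)+(n:ℝ)-1) * eval x (ypoly n m) = 0 := by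
  have h := congrArg (eval x) (ypoly_ode_poly n m)
  simp only [eval_add, eval_mul, eval_C, eval_X, eval_pow] at h
  nlinarith [h]

lemma ypoly_eval_zero (n m : ℕ) : eval 0 (ypoly n m) = 0 := by
  simp [ypoly, eval_finset_sum]

lemma ypoly_deriv_eval_zero (n m : ℕ) : eval 0 (derivative (ypoly n m)) = 1 := by
  rw [ypoly, derivative_sum, eval_finset_sum]
  rw [Finset.sum_eq_single 0]
  · simp [acoef_zero]
  · intro i _ hi
    simp only [derivative_C_mul, derivative_X_pow, eval_mul, eval_C, eval_pow, eval_X,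
      eval_natCast]
    rw [zero_pow (by omega : 2*i+1-1 ≠ 0)]
    ring
  · intro h; simp at h

lemma ypoly_eval_eq_sum (n m : ℕ) (x : ℝ) :
    eval x (ypoly n m) = ∑ j ∈ Finset.range (m+1), acoef n m j * x^(2*j+1) := by
  simp [ypoly, eval_finset_sum]

section Analysis

open intervalIntegral

lemma key_general (n : ℕ) (hn : 2 ≤ n) (lam : ℝ) (p : ℝ → ℝ) (hp : IsMeridianSol n lam p)
    (y : Polynomial ℝ) (μy : ℝ)
    (hyode : ∀ x : ℝ, (1 - x^2) * eval x (derivative (derivative y))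
      - ((n:ℝ)-1) * x * eval x (derivative y) + μy * eval x y = 0)
    (hy0 : eval 0 y = 0) (hy'0 : eval 0 (derivative y) = 1) :
    (μy - lam*(lam+(n:ℝ)-2)) *
      ∫ x in (0:ℝ)..(Real.pi/2), Real.sin x ^ (n-2) * p x * eval (Real.cos x) y
    = p (Real.pi/2) := by
  obtain ⟨hpc, hp1, hp2, hode, hp0, hp'0⟩ := hp
  have hπ := Real.pi_pos
  have hT : (0:ℝ) < Real.pi/2 := by linarith
  have hUD : UniqueDiffOn ℝ (Icc (0:ℝ) (Real.pi/2)) := uniqueDiffOn_Icc hT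
  set W : ℝ → ℝ := fun t => Real.sin t ^ (n-2) *
    (pderiv p t * eval (Real.cos t) y
      - p t * (eval (Real.cos t) (derivative y) * (-Real.sin t))) with hWdef
  have hceval : ∀ q : Polynomial ℝ, Continuous fun t : ℝ => eval (Real.cos t) q :=
    fun q => q.continuous.comp Real.continuous_cos
  have hc1 : ContinuousOn (pderiv p) (Icc 0 (Real.pi/2)) :=
    hp1.continuousOn_derivWithin hUD le_rfl
  have hWc : ContinuousOn W (Icc 0 (Real.pi/2)) := by
    apply ContinuousOn.mul ((Real.continuous_sin.pow _).continuousOn)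
    apply ContinuousOn.sub
    · exact hc1.mul (hceval y).continuousOn
    · exact hpc.mul (((hceval (derivative y)).mul Real.continuous_sin.neg).continuousOn)
  have hWd : ∀ x ∈ Ioo (0:ℝ) (Real.pi/2), HasDerivAt W
      ((μy - lam*(lam+(n:ℝ)-2)) * (Real.sin x ^ (n-2) * p x * eval (Real.cos x) y)) x := by
    rintro x ⟨hx0, hxT⟩
    have hxIcc : Icc (0:ℝ) (Real.pi/2) ∈ nhds x := Icc_mem_nhds hx0 hxT
    have hxIoo : Ioo (0:ℝ) (Real.pi/2) ∈ nhds x := Ioo_mem_nhds hx0 hxT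
    have hsin : 0 < Real.sin x := Real.sin_pos_of_pos_of_lt_pi hx0 (by linarith)
    have hD1 : HasDerivAt p (pderiv p x) x :=
      (hp1.differentiableOn one_ne_zero x ⟨hx0.le, hxT.le⟩).hasDerivWithinAt.hasDerivAt hxIcc
    have heq : pderiv p =ᶠ[nhds x] deriv p := by
      filter_upwards [hxIoo] with t ht
      exact derivWithin_of_mem_nhds (Icc_mem_nhds ht.1 ht.2)
    have hD2 : HasDerivAt (pderiv p) (pderiv2 p x) x := by
      have h2' : ContDiffOn ℝ 2 p (Ioo 0 (Real.pi/2)) := hp2.mono Ioo_subset_Ioc_self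
      have hdOn : ContDiffOn ℝ 1 (deriv p) (Ioo 0 (Real.pi/2)) :=
        h2'.deriv_of_isOpen isOpen_Ioo (by norm_num)
      have hdiff : DifferentiableAt ℝ (deriv p) x :=
        (hdOn.differentiableOn one_ne_zero).differentiableAt hxIoo
      have h1 : HasDerivAt (deriv p) (deriv (deriv p) x) x := hdiff.hasDerivAt
      have h2 : HasDerivAt (pderiv p) (deriv (deriv p) x) x := h1.congr_of_eventuallyEq heq
      have h3 : pderiv2 p x = deriv (deriv p) x := by
        rw [pderiv2, derivWithin_of_mem_nhds hxIcc]
        exact heq.deriv_eq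
      rw [h3]; exact h2
    have hQ : HasDerivAt (fun t => eval (Real.cos t) y)
        (eval (Real.cos x) (derivative y) * (-Real.sin x)) x := by
      simpa [Function.comp_def] using (y.hasDerivAt (Real.cos x)).comp x (Real.hasDerivAt_cos x)
    have hQd : HasDerivAt (fun t => eval (Real.cos t) (derivative y))
        (eval (Real.cos x) (derivative (derivative y)) * (-Real.sin x)) x := by
      simpa [Function.comp_def] using ((derivative y).hasDerivAt (Real.cos x)).comp x (Real.hasDerivAt_cos x)
    have hQ2 : HasDerivAt (fun t => eval (Real.cos t) (derivative y) * (-Real.sin t))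
        (eval (Real.cos x) (derivative (derivative y)) * (-Real.sin x) * (-Real.sin x)
          + eval (Real.cos x) (derivative y) * (-Real.cos x)) x :=
      hQd.mul (Real.hasDerivAt_sin x).neg
    have hS : HasDerivAt (fun t => Real.sin t ^ (n-2))
        (((n-2:ℕ):ℝ) * Real.sin x ^ (n-2-1) * Real.cos x) x := (Real.hasDerivAt_sin x).pow _
    have hInner : HasDerivAt
        (fun t => pderiv p t * eval (Real.cos t) y
          - p t * (eval (Real.cos t) (derivative y) * (-Real.sin t)))
        (pderiv2 p x * eval (Real.cos x) y
            + pderiv p x * (eval (Real.cos x) (derivative y) * (-Real.sin x))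
          - (pderiv p x * (eval (Real.cos x) (derivative y) * (-Real.sin x))
            + p x * (eval (Real.cos x) (derivative (derivative y)) * (-Real.sin x) * (-Real.sin x)
              + eval (Real.cos x) (derivative y) * (-Real.cos x)))) x :=
      (hD2.mul hQ).sub (hD1.mul hQ2)
    have hWd' := hS.mul hInner
    refine hWd'.congr_deriv ?_
    symm
    have hODE := hode x ⟨hx0, by linarith⟩
    have hY := hyode (Real.cos x)
    have hsc : Real.sin x ^2 + Real.cos x ^2 = 1 := Real.sin_sq_add_cos_sq x
    have hsne : Real.sin x ≠ 0 := ne_of_gt hsin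
    obtain ⟨k, rfl⟩ : ∃ k, n = k + 2 := ⟨n - 2, by omega⟩
    cases k with
    | zero =>
      norm_num at hODE ⊢
      linear_combination (-(eval (Real.cos x) y)) * hODE
        + (p x) * hY + (p x * eval (Real.cos x) (derivative (derivative y))) * hsc
    | succ j =>
      have hODE2 : Real.sin x * pderiv2 p x + ((j:ℝ)+1) * Real.cos x * pderiv p x
          + lam*(lam+(j:ℝ)+1) * (Real.sin x * p x) = 0 := by
        have h := hODE
        push_cast at h
        field_simp at h
        linarith [h]
      push_cast
      push_cast at hY
      linear_combination (-(Real.sin x ^ j * eval (Real.cos x) y)) * hODE2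
        + (Real.sin x ^ (j+1) * p x) * hY
        + (Real.sin x ^ (j+1) * p x * eval (Real.cos x) (derivative (derivative y))) * hsc
  have hgC : ContinuousOn
      (fun x => (μy - lam*(lam+(n:ℝ)-2)) * (Real.sin x ^ (n-2) * p x * eval (Real.cos x) y))
      (Icc 0 (Real.pi/2)) := by
    apply ContinuousOn.mul continuousOn_const
    exact (((Real.continuous_sin.pow _).continuousOn.mul hpc).mul (hceval y).continuousOn)
  have hint : IntervalIntegrable
      (fun x => (μy - lam*(lam+(n:ℝ)-2)) * (Real.sin x ^ (n-2) * p x * eval (Real.cos x) y))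
      MeasureTheory.volume 0 (Real.pi/2) := by
    apply ContinuousOn.intervalIntegrable
    rwa [uIcc_of_le hT.le]
  have hFTC := intervalIntegral.integral_eq_sub_of_hasDeriv_right_of_le hT.le hWc
    (fun x hx => (hWd x hx).hasDerivWithinAt) hint
  have hW0 : W 0 = 0 := by
    simp [hWdef, hp'0]
  have hWT : W (Real.pi/2) = p (Real.pi/2) := by
    simp [hWdef, Real.sin_pi_div_two, Real.cos_pi_div_two, hy0, hy'0]
  rw [intervalIntegral.integral_const_mul, hW0, hWT, sub_zero] at hFTC
  exact hFTC

lemma mu_factor (n : ℕ) (hn : 2 ≤ n) (lam : ℝ) (hlam : 0 < lam) (m : ℕ)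
    (hne : lam ≠ 2*(m:ℝ)+1) :
    (2*(m:ℝ)+1)*(2*(m:ℝ)+(n:ℝ)-1) - lam*(lam+(n:ℝ)-2) ≠ 0 := by
  intro h0
  have hfac : (lam - (2*(m:ℝ)+1)) * (lam + (2*(m:ℝ)+1) + ((n:ℝ)-2)) = 0 := by
    linear_combination -h0
  rcases mul_eq_zero.1 hfac with h | h
  · exact hne (by linarith)
  · have hm : (0:ℝ) ≤ (m:ℝ) := Nat.cast_nonneg m
    have hnR : (2:ℝ) ≤ (n:ℝ) := by exact_mod_cast hn
    nlinarith

lemma integral_eval_eq (n : ℕ) (hn : 2 ≤ n) (p : ℝ → ℝ)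
    (hpc : ContinuousOn p (Icc 0 (Real.pi/2))) (m : ℕ) :
    ∫ x in (0:ℝ)..(Real.pi/2), Real.sin x ^ (n-2) * p x * eval (Real.cos x) (ypoly n m)
      = ∑ j ∈ Finset.range (m+1), acoef n m j *
          ∫ x in (0:ℝ)..(Real.pi/2), Real.sin x ^ (n-2) * p x * Real.cos x ^ (2*j+1) := by
  have hπ := Real.pi_pos
  have hT : (0:ℝ) ≤ Real.pi/2 := by linarith
  have heq : EqOn (fun x => Real.sin x ^ (n-2) * p x * eval (Real.cos x) (ypoly n m))
      (fun x => ∑ j ∈ Finset.range (m+1),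
        acoef n m j * (Real.sin x ^ (n-2) * p x * Real.cos x ^ (2*j+1)))
      (uIcc (0:ℝ) (Real.pi/2)) := by
    intro x _
    simp only [ypoly_eval_eq_sum, Finset.mul_sum]
    exact Finset.sum_congr rfl fun j _ => by ring
  rw [intervalIntegral.integral_congr heq]
  rw [intervalIntegral.integral_finset_sum]
  · exact Finset.sum_congr rfl fun j _ => intervalIntegral.integral_const_mul _ _
  · intro j _
    apply ContinuousOn.intervalIntegrable
    rw [uIcc_of_le hT]
    exact continuousOn_const.mul (((Real.continuous_sin.pow _).continuousOn.mul hpc).mul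
      (Real.continuous_cos.pow _).continuousOn)

lemma moments_zero (n : ℕ) (hn : 2 ≤ n) (lam : ℝ) (hlam : 0 < lam) (p : ℝ → ℝ)
    (hp : IsMeridianSol n lam p) (hpT : p (Real.pi/2) = 0)
    (hodd : ∀ m : ℕ, lam ≠ 2*(m:ℝ)+1) :
    ∀ k : ℕ, ∫ x in (0:ℝ)..(Real.pi/2),
      Real.sin x ^ (n-2) * p x * Real.cos x ^ (2*k+1) = 0 := by
  have hI : ∀ m : ℕ, ∫ x in (0:ℝ)..(Real.pi/2),
      Real.sin x ^ (n-2) * p x * eval (Real.cos x) (ypoly n m) = 0 := by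
    intro m
    have hk := key_general n hn lam p hp (ypoly n m) ((2*(m:ℝ)+1)*(2*(m:ℝ)+(n:ℝ)-1))
      (ypoly_ode n m) (ypoly_eval_zero n m) (ypoly_deriv_eval_zero n m)
    rw [hpT] at hk
    exact (mul_eq_zero.1 hk).resolve_left (mu_factor n hn lam hlam m (hodd m))
  intro k
  induction k using Nat.strong_induction_on with
  | _ k ih =>
    have hIk := hI k
    rw [integral_eval_eq n hn p hp.1 k, Finset.sum_range_succ] at hIk
    have hz : ∑ j ∈ Finset.range k, acoef n k j *
        ∫ x in (0:ℝ)..(Real.pi/2), Real.sin x ^ (n-2) * p x * Real.cos x ^ (2*j+1) = 0 := by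
      apply Finset.sum_eq_zero
      intro j hj
      rw [ih j (Finset.mem_range.1 hj), mul_zero]
    rw [hz, zero_add] at hIk
    exact (mul_eq_zero.1 hIk).resolve_left (acoef_ne_zero n k hn k le_rfl)

lemma weighted_integral_zero (n : ℕ) (hn : 2 ≤ n) (lam : ℝ) (hlam : 0 < lam) (p : ℝ → ℝ)
    (hp : IsMeridianSol n lam p) (hpT : p (Real.pi/2) = 0)
    (hodd : ∀ m : ℕ, lam ≠ 2*(m:ℝ)+1) :
    ∫ x in (0:ℝ)..(Real.pi/2), (Real.sin x ^ (n-2) * p x * Real.cos x) * p x = 0 := by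
  have hπ := Real.pi_pos
  have hT : (0:ℝ) < Real.pi/2 := by linarith
  have hM := moments_zero n hn lam hlam p hp hpT hodd
  have hwcont : ContinuousOn (fun x => Real.sin x ^ (n-2) * p x * Real.cos x)
      (Icc 0 (Real.pi/2)) :=
    ((Real.continuous_sin.pow _).continuousOn.mul hp.1).mul Real.continuous_cos.continuousOn
  obtain ⟨B, hB⟩ := isCompact_Icc.exists_bound_of_continuousOn hwcont
  have hB0 : 0 ≤ B := le_trans (norm_nonneg _) (hB 0 ⟨le_rfl, hT.le⟩)
  -- even moments with weight
  have hMw : ∀ i : ℕ, ∫ x in (0:ℝ)..(Real.pi/2),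
      (Real.sin x ^ (n-2) * p x * Real.cos x) * (Real.cos x ^ 2) ^ i = 0 := by
    intro i
    calc ∫ x in (0:ℝ)..(Real.pi/2),
          (Real.sin x ^ (n-2) * p x * Real.cos x) * (Real.cos x ^ 2) ^ i
        = ∫ x in (0:ℝ)..(Real.pi/2), Real.sin x ^ (n-2) * p x * Real.cos x ^ (2*i+1) := by
          apply intervalIntegral.integral_congr
          intro x _
          simp only [← pow_mul]
          ring
      _ = 0 := hM i
  -- polynomial moments
  have hQint : ∀ q : Polynomial ℝ, ∫ x in (0:ℝ)..(Real.pi/2),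
      (Real.sin x ^ (n-2) * p x * Real.cos x) * eval (Real.cos x ^ 2) q = 0 := by
    intro q
    have heq : EqOn (fun x => (Real.sin x ^ (n-2) * p x * Real.cos x) * eval (Real.cos x ^ 2) q)
        (fun x => ∑ i ∈ Finset.range (q.natDegree+1),
          q.coeff i * ((Real.sin x ^ (n-2) * p x * Real.cos x) * (Real.cos x ^ 2) ^ i))
        (uIcc (0:ℝ) (Real.pi/2)) := by
      intro x _
      simp only [eval_eq_sum_range, Finset.mul_sum]
      exact Finset.sum_congr rfl fun i _ => by ring
    rw [intervalIntegral.integral_congr heq, intervalIntegral.integral_finset_sum]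
    · simp only [intervalIntegral.integral_const_mul, hMw, mul_zero, Finset.sum_const_zero]
    · intro i _
      apply ContinuousOn.intervalIntegrable
      rw [uIcc_of_le hT.le]
      exact continuousOn_const.mul (hwcont.mul ((Real.continuous_cos.pow 2).pow i).continuousOn)
  -- Stone-Weierstrass
  set c0 : C(Icc (0:ℝ) (Real.pi/2), ℝ) :=
    ⟨fun t => Real.cos (t:ℝ) ^ 2, ((Real.continuous_cos.comp continuous_subtype_val).pow 2)⟩
    with hc0def
  set A := Algebra.adjoin ℝ ({c0} : Set C(Icc (0:ℝ) (Real.pi/2), ℝ)) with hAdef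
  have hsep : A.SeparatesPoints := by
    intro x y hxy
    refine ⟨_, ⟨c0, Algebra.subset_adjoin (Set.mem_singleton c0), rfl⟩, ?_⟩
    intro hEq
    have hx2 := x.2
    have hy2 := y.2
    simp only [hc0def, ContinuousMap.coe_mk] at hEq
    have hcx : (0:ℝ) ≤ Real.cos x.1 :=
      Real.cos_nonneg_of_mem_Icc ⟨by linarith [hx2.1], hx2.2⟩
    have hcy : (0:ℝ) ≤ Real.cos y.1 :=
      Real.cos_nonneg_of_mem_Icc ⟨by linarith [hy2.1], hy2.2⟩
    have hc : Real.cos x.1 = Real.cos y.1 := (sq_eq_sq₀ hcx hcy).1 hEq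
    have : x.1 = y.1 := Real.injOn_cos ⟨hx2.1, by linarith [hx2.2]⟩ ⟨hy2.1, by linarith [hy2.2]⟩ hc
    exact hxy (Subtype.ext this)
  have htop := ContinuousMap.subalgebra_topologicalClosure_eq_top_of_separatesPoints A hsep
  set f0 : C(Icc (0:ℝ) (Real.pi/2), ℝ) := ⟨(Icc (0:ℝ) (Real.pi/2)).restrict p, hp.1.restrict⟩
    with hf0def
  have hf0 : f0 ∈ closure (A : Set C(Icc (0:ℝ) (Real.pi/2), ℝ)) := by
    have h1 : f0 ∈ A.topologicalClosure := by rw [htop]; trivial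
    exact h1
  set J := ∫ x in (0:ℝ)..(Real.pi/2), (Real.sin x ^ (n-2) * p x * Real.cos x) * p x with hJdef
  by_contra hJ0
  have hbound : ∀ ε > 0, |J| ≤ B * (Real.pi/2) * ε := by
    intro ε hε
    obtain ⟨g, hgA, hgd⟩ := Metric.mem_closure_iff.1 hf0 ε hε
    rw [hAdef, Algebra.adjoin_singleton_eq_range_aeval] at hgA
    obtain ⟨q, hq⟩ := hgA
    have hgval : ∀ t : Icc (0:ℝ) (Real.pi/2), g t = eval (Real.cos (t:ℝ) ^ 2) q := by
      intro t
      rw [← hq]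
      exact aeval_continuousMap_apply q c0 t
    have hint1 : IntervalIntegrable
        (fun x => (Real.sin x ^ (n-2) * p x * Real.cos x) * (p x - eval (Real.cos x ^ 2) q))
        MeasureTheory.volume 0 (Real.pi/2) := by
      apply ContinuousOn.intervalIntegrable
      rw [uIcc_of_le hT.le]
      exact hwcont.mul (hp.1.sub ((q.continuous.comp (Real.continuous_cos.pow 2)).continuousOn))
    have hint2 : IntervalIntegrable
        (fun x => (Real.sin x ^ (n-2) * p x * Real.cos x) * eval (Real.cos x ^ 2) q)
        MeasureTheory.volume 0 (Real.pi/2) := by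
      apply ContinuousOn.intervalIntegrable
      rw [uIcc_of_le hT.le]
      exact hwcont.mul ((q.continuous.comp (Real.continuous_cos.pow 2)).continuousOn)
    have hsplit : J = (∫ x in (0:ℝ)..(Real.pi/2),
        (Real.sin x ^ (n-2) * p x * Real.cos x) * (p x - eval (Real.cos x ^ 2) q))
        + ∫ x in (0:ℝ)..(Real.pi/2),
        (Real.sin x ^ (n-2) * p x * Real.cos x) * eval (Real.cos x ^ 2) q := by
      rw [← intervalIntegral.integral_add hint1 hint2, hJdef]
      apply intervalIntegral.integral_congr
      intro x _
      ring
    rw [hQint q, add_zero] at hsplit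
    have hnorm : ∀ x ∈ Set.uIoc (0:ℝ) (Real.pi/2),
        ‖(Real.sin x ^ (n-2) * p x * Real.cos x) * (p x - eval (Real.cos x ^ 2) q)‖ ≤ B * ε := by
      intro x hx
      rw [Set.uIoc_of_le hT.le] at hx
      have hxI : x ∈ Icc (0:ℝ) (Real.pi/2) := ⟨hx.1.le, hx.2⟩
      have h1 : ‖Real.sin x ^ (n-2) * p x * Real.cos x‖ ≤ B := hB x hxI
      have h2 : |p x - eval (Real.cos x ^ 2) q| ≤ ε := by
        have := ContinuousMap.dist_apply_le_dist (f := f0) (g := g) ⟨x, hxI⟩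
        rw [Real.dist_eq] at this
        have hval : f0 ⟨x, hxI⟩ = p x := rfl
        rw [hval, hgval ⟨x, hxI⟩] at this
        exact le_of_lt (lt_of_le_of_lt this hgd)
      calc ‖(Real.sin x ^ (n-2) * p x * Real.cos x) * (p x - eval (Real.cos x ^ 2) q)‖
          = ‖Real.sin x ^ (n-2) * p x * Real.cos x‖ * |p x - eval (Real.cos x ^ 2) q| :=
            norm_mul _ _
        _ ≤ B * ε := mul_le_mul h1 h2 (abs_nonneg _) hB0
    have := intervalIntegral.norm_integral_le_of_norm_le_const hnorm
    rw [← hsplit] at this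
    calc |J| ≤ B * ε * |Real.pi/2 - 0| := this
      _ = B * (Real.pi/2) * ε := by
          rw [sub_zero, abs_of_pos hT]; ring
  have hJpos : 0 < |J| := abs_pos.2 hJ0
  have hεpos : 0 < |J| / (B * (Real.pi/2) + 1) := by positivity
  have h1 := hbound _ hεpos
  have h2 : B * (Real.pi/2) * (|J| / (B * (Real.pi/2) + 1)) < |J| := by
    have hden : 0 < B * (Real.pi/2) + 1 := by positivity
    rw [mul_comm, div_mul_eq_mul_div, div_lt_iff₀ hden]
    nlinarith [hJpos, hB0, hπ]
  linarith

lemma forward_direction (n : ℕ) (hn : 2 ≤ n) (lam : ℝ) (hlam : 0 < lam) (p : ℝ → ℝ)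
    (hp : IsMeridianSol n lam p) (hpT : p (Real.pi/2) = 0)
    (hodd : ∀ m : ℕ, lam ≠ 2*(m:ℝ)+1) : False := by
  have hπ := Real.pi_pos
  have hT : (0:ℝ) < Real.pi/2 := by linarith
  have hJ := weighted_integral_zero n hn lam hlam p hp hpT hodd
  have hp0 : p 0 = 1 := hp.2.2.2.2.1
  -- the integrand h x = sin^(n-2) x * p x * cos x * p x is nonneg on [0, π/2]
  have hwpcont : ContinuousOn (fun x => (Real.sin x ^ (n-2) * p x * Real.cos x) * p x)
      (Icc 0 (Real.pi/2)) :=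
    (((Real.continuous_sin.pow _).continuousOn.mul hp.1).mul
      Real.continuous_cos.continuousOn).mul hp.1
  have hnn : ∀ x ∈ Icc (0:ℝ) (Real.pi/2), 0 ≤ (Real.sin x ^ (n-2) * p x * Real.cos x) * p x := by
    intro x hx
    have hs : 0 ≤ Real.sin x := Real.sin_nonneg_of_nonneg_of_le_pi hx.1 (by linarith [hx.2])
    have hc : 0 ≤ Real.cos x := Real.cos_nonneg_of_mem_Icc ⟨by linarith [hx.1], hx.2⟩
    have : (Real.sin x ^ (n-2) * p x * Real.cos x) * p x
        = Real.sin x ^ (n-2) * Real.cos x * p x ^ 2 := by ring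
    rw [this]
    positivity
  -- find a small interval near 0 where p > 1/2
  have hcw : ContinuousWithinAt p (Icc 0 (Real.pi/2)) 0 := hp.1 0 ⟨le_rfl, hT.le⟩
  have hmem : {x | (1:ℝ)/2 < p x} ∈ nhdsWithin 0 (Icc 0 (Real.pi/2)) := by
    apply hcw
    rw [hp0]
    exact Ioi_mem_nhds (by norm_num)
  obtain ⟨δ, hδ0, hδ⟩ := Metric.mem_nhdsWithin_iff.1 hmem
  set d := min (δ/2) (Real.pi/4) with hd
  have hd0 : 0 < d := by
    apply lt_min (by linarith)
    linarith
  have hdπ : d < Real.pi/2 := by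
    calc d ≤ Real.pi/4 := min_le_right _ _
      _ < Real.pi/2 := by linarith
  have hpg : ∀ x ∈ Icc (d/2) d, 1/2 < p x := by
    intro x hx
    have hx0 : 0 < x := lt_of_lt_of_le (by linarith) hx.1
    have hxd : x ≤ d := hx.2
    apply hδ
    constructor
    · rw [Metric.mem_ball, Real.dist_eq, sub_zero, abs_of_pos hx0]
      calc x ≤ d := hxd
        _ ≤ δ/2 := min_le_left _ _
        _ < δ := by linarith
    · exact ⟨hx0.le, by linarith⟩
  -- split the integral
  have hsub1 : Icc (0:ℝ) (d/2) ⊆ Icc 0 (Real.pi/2) := Icc_subset_Icc le_rfl (by linarith)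
  have hsub2 : Icc (d/2) d ⊆ Icc 0 (Real.pi/2) := Icc_subset_Icc (by linarith) (by linarith)
  have hsub3 : Icc d (Real.pi/2) ⊆ Icc 0 (Real.pi/2) := Icc_subset_Icc (by linarith) le_rfl
  have hint1 : IntervalIntegrable (fun x => (Real.sin x ^ (n-2) * p x * Real.cos x) * p x)
      MeasureTheory.volume 0 (d/2) := by
    apply ContinuousOn.intervalIntegrable
    rw [uIcc_of_le (by linarith)]
    exact hwpcont.mono hsub1
  have hint2 : IntervalIntegrable (fun x => (Real.sin x ^ (n-2) * p x * Real.cos x) * p x)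
      MeasureTheory.volume (d/2) d := by
    apply ContinuousOn.intervalIntegrable
    rw [uIcc_of_le (by linarith)]
    exact hwpcont.mono hsub2
  have hint3 : IntervalIntegrable (fun x => (Real.sin x ^ (n-2) * p x * Real.cos x) * p x)
      MeasureTheory.volume d (Real.pi/2) := by
    apply ContinuousOn.intervalIntegrable
    rw [uIcc_of_le (by linarith)]
    exact hwpcont.mono hsub3
  have hsplit : (∫ x in (0:ℝ)..(d/2), (Real.sin x ^ (n-2) * p x * Real.cos x) * p x)
      + (∫ x in (d/2)..d, (Real.sin x ^ (n-2) * p x * Real.cos x) * p x)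
      + (∫ x in d..(Real.pi/2), (Real.sin x ^ (n-2) * p x * Real.cos x) * p x)
      = ∫ x in (0:ℝ)..(Real.pi/2), (Real.sin x ^ (n-2) * p x * Real.cos x) * p x := by
    rw [intervalIntegral.integral_add_adjacent_intervals hint1 hint2]
    exact intervalIntegral.integral_add_adjacent_intervals (hint1.trans hint2) hint3
  have hI1 : 0 ≤ ∫ x in (0:ℝ)..(d/2), (Real.sin x ^ (n-2) * p x * Real.cos x) * p x :=
    intervalIntegral.integral_nonneg (by linarith) (fun x hx => hnn x (hsub1 hx))
  have hI3 : 0 ≤ ∫ x in d..(Real.pi/2), (Real.sin x ^ (n-2) * p x * Real.cos x) * p x :=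
    intervalIntegral.integral_nonneg (by linarith) (fun x hx => hnn x (hsub3 hx))
  -- middle integral is strictly positive
  set K := Real.sin (d/2) ^ (n-2) * Real.cos d * (1/4) with hK
  have hsd : 0 < Real.sin (d/2) := Real.sin_pos_of_pos_of_lt_pi (by linarith) (by linarith)
  have hcd : 0 < Real.cos d := Real.cos_pos_of_mem_Ioo ⟨by linarith, hdπ⟩
  have hKpos : 0 < K := by rw [hK]; positivity
  have hI2 : K * (d - d/2) ≤ ∫ x in (d/2)..d, (Real.sin x ^ (n-2) * p x * Real.cos x) * p x := by
    have hmono := intervalIntegral.integral_mono_on (by linarith : d/2 ≤ d)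
      (_root_.intervalIntegrable_const (c := K)) hint2 ?_
    · rw [intervalIntegral.integral_const, smul_eq_mul, mul_comm] at hmono
      exact hmono
    · intro x hx
      have hx0 : 0 < x := lt_of_lt_of_le (by linarith) hx.1
      have hs2 : Real.sin (d/2) ≤ Real.sin x :=
        Real.sin_le_sin_of_le_of_le_pi_div_two (by linarith) (by linarith [hx.2]) hx.1
      have hspow : Real.sin (d/2) ^ (n-2) ≤ Real.sin x ^ (n-2) :=
        pow_le_pow_left₀ hsd.le hs2 _
      have hc2 : Real.cos d ≤ Real.cos x :=
        Real.cos_le_cos_of_nonneg_of_le_pi hx0.le (by linarith) hx.2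
      have hpx : 1/2 < p x := hpg x hx
      have hsq : (1:ℝ)/4 ≤ p x ^ 2 := by nlinarith
      have hsinx : (0:ℝ) ≤ Real.sin x := le_trans hsd.le hs2
      have hsx : (0:ℝ) ≤ Real.sin x ^ (n-2) := pow_nonneg hsinx _
      have hcx : (0:ℝ) ≤ Real.cos x := lt_of_lt_of_le hcd hc2 |>.le
      calc K ≤ Real.sin x ^ (n-2) * Real.cos x * (1/4) := by
            rw [hK]
            apply mul_le_mul_of_nonneg_right _ (by norm_num)
            exact mul_le_mul hspow hc2 hcd.le hsx
        _ ≤ Real.sin x ^ (n-2) * Real.cos x * p x ^ 2 := by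
            apply mul_le_mul_of_nonneg_left hsq (mul_nonneg hsx hcx)
        _ = (Real.sin x ^ (n-2) * p x * Real.cos x) * p x := by ring
  have hKd : 0 < K * (d - d/2) := by
    apply mul_pos hKpos
    linarith
  rw [hJ] at hsplit
  linarith

end Analysis
/-- `p(π/2) = 0` precisely when `λ` is an odd positive integer. -/
theorem meridian_sol_vanishes_at_pi_div_two_iff_odd (n : ℕ) (hn : 2 ≤ n)
    (lam : ℝ) (hlam : 0 < lam) (p : ℝ → ℝ) (hp : IsMeridianSol n lam p) :
    p (Real.pi / 2) = 0 ↔ ∃ m : ℕ, lam = 2 * (m : ℝ) + 1 := by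
  constructor
  · intro hpT
    by_contra hodd
    push_neg at hodd
    exact forward_direction n hn lam hlam p hp hpT hodd
  · rintro ⟨m, hm⟩
    have hk := key_general n hn lam p hp (ypoly n m) ((2*(m:ℝ)+1)*(2*(m:ℝ)+(n:ℝ)-1))
      (ypoly_ode n m) (ypoly_eval_zero n m) (ypoly_deriv_eval_zero n m)
    have h0 : (2*(m:ℝ)+1)*(2*(m:ℝ)+(n:ℝ)-1) - lam*(lam+(n:ℝ)-2) = 0 := by
      rw [hm]; ring
    rw [h0, zero_mul] at hk
    exact hk.symm
end

section
/- Let n ≥ 2 be an integer, let λ > 0, and let p be any function as in the context. Then p'(π/2) = 0 if and only if λ is an even positive integer (i.e. λ = 2m for some positive natural number m). -/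
open Real Set Topology Filter

-- Auxiliary development
noncomputable def bco (n m : ℕ) : ℕ → ℝ
  | 0 => 1
  | j+1 => bco n m j * ((2*(j:ℝ)) * (2*(j:ℝ) + (n:ℝ) - 2) - (2*(m:ℝ)) * (2*(m:ℝ) + (n:ℝ) - 2))
      / ((2*(j:ℝ)+2) * (2*(j:ℝ)+1))

noncomputable def U (n m : ℕ) (t : ℝ) : ℝ := ∑ j ∈ Finset.range (m+1), bco n m j * t ^ (2*j)
noncomputable def U1 (n m : ℕ) (t : ℝ) : ℝ :=
  ∑ j ∈ Finset.range (m+1), bco n m j * (2*(j:ℝ)) * t ^ (2*j-1)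
noncomputable def U2 (n m : ℕ) (t : ℝ) : ℝ :=
  ∑ j ∈ Finset.range (m+1), bco n m j * (2*(j:ℝ)) * (2*(j:ℝ)-1) * t ^ (2*j-2)

lemma U_cont (n m : ℕ) : Continuous (U n m) := by
  unfold U; exact continuous_finset_sum _ fun j _ => continuous_const.mul (continuous_pow (2*j))
lemma U1_cont (n m : ℕ) : Continuous (U1 n m) := by
  unfold U1; exact continuous_finset_sum _ fun j _ => continuous_const.mul (continuous_pow (2*j-1))

lemma U_ode (n m : ℕ) (t : ℝ) :
    (1 - t^2) * U2 n m t - ((n:ℝ) - 1) * t * U1 n m t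
      + (2*(m:ℝ)) * (2*(m:ℝ) + (n:ℝ) - 2) * U n m t = 0 := by
  set μ : ℝ := (2*(m:ℝ)) * (2*(m:ℝ) + (n:ℝ) - 2) with hμ
  have key : (1 - t^2) * U2 n m t - ((n:ℝ) - 1) * t * U1 n m t + μ * U n m t
      = U2 n m t - ∑ j ∈ Finset.range (m+1),
        bco n m j * ((2*(j:ℝ)) * (2*(j:ℝ) + (n:ℝ) - 2) - μ) * t ^ (2*j) := by
    unfold U U1 U2
    rw [Finset.mul_sum, Finset.mul_sum, Finset.mul_sum,
      ← Finset.sum_sub_distrib, ← Finset.sum_add_distrib, ← Finset.sum_sub_distrib]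
    apply Finset.sum_congr rfl
    intro j _
    rcases j with _ | j
    · norm_num; ring
    · have h1 : 2*(j+1) - 1 = 2*j+1 := by omega
      have h2 : 2*(j+1) - 2 = 2*j := by omega
      rw [h1, h2, show 2*(j+1) = 2*j + 2 from by omega]
      push_cast
      rw [pow_add, pow_add, pow_succ]
      ring
  rw [key]
  unfold U2
  rw [Finset.sum_range_succ' _ m, Finset.sum_range_succ _ m]
  have hlast : bco n m m * ((2*(m:ℝ)) * (2*(m:ℝ) + (n:ℝ) - 2) - μ) * t ^ (2*m) = 0 := by
    rw [hμ]; ring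
  rw [hlast, add_zero]
  have hzero : bco n m 0 * (2*((0:ℕ):ℝ)) * (2*((0:ℕ):ℝ)-1) * t ^ (2*0-2) = 0 := by
    norm_num
  rw [hzero, add_zero, sub_eq_zero]
  apply Finset.sum_congr rfl
  intro j _
  have h2 : 2*(j+1) - 2 = 2*j := by omega
  rw [h2]
  rw [show bco n m (j+1) = bco n m j * ((2*(j:ℝ)) * (2*(j:ℝ) + (n:ℝ) - 2) - (2*(m:ℝ)) * (2*(m:ℝ) + (n:ℝ) - 2))
      / ((2*(j:ℝ)+2) * (2*(j:ℝ)+1)) from rfl]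
  have hden : ((2*(j:ℝ)+2) * (2*(j:ℝ)+1)) ≠ 0 := by positivity
  field_simp
  push_cast
  ring

lemma U_hasDeriv (n m : ℕ) (t : ℝ) : HasDerivAt (U n m) (U1 n m t) t := by
  have h : HasDerivAt (fun t : ℝ => ∑ j ∈ Finset.range (m+1), bco n m j * t ^ (2*j))
      (∑ j ∈ Finset.range (m+1), bco n m j * (2*(j:ℝ)) * t ^ (2*j-1)) t := by
    apply HasDerivAt.fun_sum
    intro j _
    have h := (hasDerivAt_pow (2*j) t).const_mul (bco n m j)
    refine h.congr_deriv ?_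
    push_cast
    ring
  exact h

lemma U1_hasDeriv (n m : ℕ) (t : ℝ) : HasDerivAt (U1 n m) (U2 n m t) t := by
  have h : HasDerivAt (fun t : ℝ => ∑ j ∈ Finset.range (m+1), bco n m j * (2*(j:ℝ)) * t ^ (2*j-1))
      (∑ j ∈ Finset.range (m+1), bco n m j * (2*(j:ℝ)) * (2*(j:ℝ)-1) * t ^ (2*j-2)) t := by
    apply HasDerivAt.fun_sum
    intro j _
    have h := (hasDerivAt_pow (2*j-1) t).const_mul (bco n m j * (2*(j:ℝ)))
    refine h.congr_deriv ?_
    rcases j with _ | j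
    · norm_num
    · rw [show 2*(j+1) - 1 = 2*j+1 from by omega, show 2*(j+1) - 2 = 2*j from by omega,
        show 2*j+1-1 = 2*j from by omega]
      push_cast
      ring
  exact h

lemma U_zero (n m : ℕ) : U n m 0 = 1 := by
  unfold U
  rw [Finset.sum_eq_single 0]
  · simp [bco]
  · intro j _ hj
    rcases j with _ | j
    · omega
    · simp [pow_succ]
  · intro h; simp at h

lemma U1_zero (n m : ℕ) : U1 n m 0 = 0 := by
  unfold U1
  apply Finset.sum_eq_zero
  intro j _
  rcases j with _ | j
  · norm_num
  · rw [show 2*(j+1) - 1 = 2*j+1 from by omega]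
    simp [pow_succ]

lemma bco_ne_zero (n m : ℕ) (hn : 2 ≤ n) : ∀ j ≤ m, bco n m j ≠ 0 := by
  intro j hj
  induction j with
  | zero => simp [bco]
  | succ j ih =>
    have hj' : j ≤ m := by omega
    have hjm : j < m := by omega
    have hb := ih hj'
    rw [show bco n m (j+1) = bco n m j * ((2*(j:ℝ)) * (2*(j:ℝ) + (n:ℝ) - 2) - (2*(m:ℝ)) * (2*(m:ℝ) + (n:ℝ) - 2))
        / ((2*(j:ℝ)+2) * (2*(j:ℝ)+1)) from rfl]
    have hn' : (2:ℝ) ≤ (n:ℝ) := by exact_mod_cast hn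
    have hjm' : (j:ℝ) < (m:ℝ) := by exact_mod_cast hjm
    have hnum : (2*(j:ℝ)) * (2*(j:ℝ) + (n:ℝ) - 2) - (2*(m:ℝ)) * (2*(m:ℝ) + (n:ℝ) - 2) ≠ 0 := by
      have hjnn : (0:ℝ) ≤ (j:ℝ) := Nat.cast_nonneg j
      nlinarith
    have hden : ((2*(j:ℝ)+2) * (2*(j:ℝ)+1)) ≠ 0 := by positivity
    exact div_ne_zero (mul_ne_zero hb hnum) hden

noncomputable def qf (n m : ℕ) (φ : ℝ) : ℝ := U n m (Real.cos φ)
noncomputable def qf1 (n m : ℕ) (φ : ℝ) : ℝ := -Real.sin φ * U1 n m (Real.cos φ)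
noncomputable def qf2 (n m : ℕ) (φ : ℝ) : ℝ :=
  -Real.cos φ * U1 n m (Real.cos φ) + Real.sin φ^2 * U2 n m (Real.cos φ)

lemma qf_hasDeriv (n m : ℕ) (φ : ℝ) : HasDerivAt (qf n m) (qf1 n m φ) φ := by
  have h := (U_hasDeriv n m (Real.cos φ)).comp φ (Real.hasDerivAt_cos φ)
  refine h.congr_deriv ?_
  unfold qf1
  ring

lemma qf1_hasDeriv (n m : ℕ) (φ : ℝ) : HasDerivAt (qf1 n m) (qf2 n m φ) φ := by
  have h1 : HasDerivAt (fun φ : ℝ => -Real.sin φ) (-Real.cos φ) φ := (Real.hasDerivAt_sin φ).neg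
  have h2 : HasDerivAt (fun φ : ℝ => U1 n m (Real.cos φ)) (U2 n m (Real.cos φ) * (-Real.sin φ)) φ :=
    (U1_hasDeriv n m (Real.cos φ)).comp φ (Real.hasDerivAt_cos φ)
  have h := h1.mul h2
  refine h.congr_deriv ?_
  unfold qf2
  ring

lemma qf_ode (n m : ℕ) (φ : ℝ) (hs : Real.sin φ ≠ 0) :
    qf2 n m φ + ((n:ℝ) - 2) * (Real.cos φ / Real.sin φ) * qf1 n m φ
      + (2*(m:ℝ)) * (2*(m:ℝ) + (n:ℝ) - 2) * qf n m φ = 0 := by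
  have h := U_ode n m (Real.cos φ)
  have hs2 : Real.sin φ ^ 2 = 1 - Real.cos φ ^ 2 := Real.sin_sq φ
  unfold qf qf1 qf2
  have hc : ((n:ℝ) - 2) * (Real.cos φ / Real.sin φ) * (-Real.sin φ * U1 n m (Real.cos φ))
      = -(((n:ℝ) - 2) * Real.cos φ * U1 n m (Real.cos φ)) := by
    field_simp
  rw [hc]
  linear_combination h + U2 n m (Real.cos φ) * hs2

lemma wron_alg (k : ℕ) (s c P P' Q Q' μ μ' : ℝ) (hs : s ≠ 0) :
    (k:ℝ) * s^(k-1) * c * (P * Q' - P' * Q)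
      + s^k * (P * (-((k:ℝ)*(c/s))*Q' - μ'*Q) - (-((k:ℝ)*(c/s))*P' - μ*P) * Q)
    = (μ - μ') * (s^k * (P * Q)) := by
  rcases k with _ | k
  · push_cast
    ring
  · rw [show (k+1)-1 = k from by omega]
    field_simp
    ring

lemma qf_continuous (n m : ℕ) : Continuous (qf n m) := (U_cont n m).comp Real.continuous_cos
lemma qf1_continuous (n m : ℕ) : Continuous (qf1 n m) :=
  (Real.continuous_sin.neg).mul ((U1_cont n m).comp Real.continuous_cos)

lemma wronskian_key (n : ℕ) (hn : 2 ≤ n) (lam : ℝ) (p : ℝ → ℝ)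
    (hp : IsMeridianSol n lam p) (m : ℕ) :
    -pderiv p (Real.pi/2)
      = (lam * (lam + (n:ℝ) - 2) - (2*(m:ℝ)) * (2*(m:ℝ) + (n:ℝ) - 2)) *
        ∫ φ in (0:ℝ)..(Real.pi/2), Real.sin φ ^ (n-2) * (p φ * qf n m φ) := by
  obtain ⟨hcont, hC1, hC2, hODE, hp0, hp'0⟩ := hp
  have hπ : (0:ℝ) < Real.pi/2 := by positivity
  set k := n - 2 with hk
  have hkc : ((n:ℝ) - 2) = ((k:ℕ):ℝ) := by
    rw [hk]; rw [Nat.cast_sub hn]; norm_num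
  set μ : ℝ := lam * (lam + (n:ℝ) - 2) with hμ
  set μ' : ℝ := (2*(m:ℝ)) * (2*(m:ℝ) + (n:ℝ) - 2) with hμ'
  set W : ℝ → ℝ := fun φ => Real.sin φ ^ k * (p φ * qf1 n m φ - pderiv p φ * qf n m φ) with hW
  set Wd : ℝ → ℝ := fun φ => (μ - μ') * (Real.sin φ ^ k * (p φ * qf n m φ)) with hWd
  have hpdc : ContinuousOn (pderiv p) (Icc 0 (Real.pi/2)) :=
    hC1.continuousOn_derivWithin (uniqueDiffOn_Icc hπ) le_rfl
  have hWcont : ContinuousOn W (Icc 0 (Real.pi/2)) := by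
    apply ContinuousOn.mul ((Real.continuous_sin.pow k).continuousOn)
    exact (hcont.mul (qf1_continuous n m).continuousOn).sub
      (hpdc.mul (qf_continuous n m).continuousOn)
  have hderiv : ∀ φ ∈ Ioo (0:ℝ) (Real.pi/2), HasDerivAt W (Wd φ) φ := by
    intro φ hφ
    have hφπ : φ < Real.pi := lt_trans hφ.2 (by linarith [Real.pi_pos])
    have hsin_pos : 0 < Real.sin φ := Real.sin_pos_of_pos_of_lt_pi hφ.1 hφπ
    have hs : Real.sin φ ≠ 0 := ne_of_gt hsin_pos
    have hIoo : Ioo (0:ℝ) (Real.pi/2) ∈ 𝓝 φ := Ioo_mem_nhds hφ.1 hφ.2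
    have hIoc : Ioc (0:ℝ) (Real.pi/2) ∈ 𝓝 φ := Filter.mem_of_superset hIoo Ioo_subset_Ioc_self
    have hIcc : Icc (0:ℝ) (Real.pi/2) ∈ 𝓝 φ := Filter.mem_of_superset hIoc Ioc_subset_Icc_self
    have hCA : ContDiffAt ℝ 2 p φ := hC2.contDiffAt hIoc
    have hpd_eq : pderiv p φ = deriv p φ := derivWithin_of_mem_nhds hIcc
    have hp1 : HasDerivAt p (pderiv p φ) φ := by
      rw [hpd_eq]
      exact (hCA.differentiableAt (by norm_num)).hasDerivAt
    obtain ⟨u, hu, hcd⟩ := hCA.contDiffOn le_rfl (by norm_num)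
    have hv : IsOpen (interior u) := isOpen_interior
    have hφv : φ ∈ interior u := mem_interior_iff_mem_nhds.mpr hu
    have hcd' : ContDiffOn ℝ 2 p (interior u) := hcd.mono interior_subset
    have hdp : ContDiffOn ℝ 1 (deriv p) (interior u) :=
      hcd'.deriv_of_isOpen hv (by norm_num)
    have hd2 : DifferentiableAt ℝ (deriv p) φ :=
      ((hdp φ hφv).differentiableWithinAt (by norm_num)).differentiableAt (hv.mem_nhds hφv)
    have heq : pderiv p =ᶠ[𝓝 φ] deriv p := by
      filter_upwards [hIoo] with ψ hψ
      exact derivWithin_of_mem_nhds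
        (Filter.mem_of_superset (Ioo_mem_nhds hψ.1 hψ.2) Ioo_subset_Icc_self)
    have hp2 : HasDerivAt (pderiv p) (pderiv2 p φ) φ := by
      have h3 : pderiv2 p φ = deriv (deriv p) φ := by
        show derivWithin (pderiv p) (Icc 0 (Real.pi/2)) φ = _
        rw [derivWithin_of_mem_nhds hIcc, heq.deriv_eq]
      rw [h3]
      exact hd2.hasDerivAt.congr_of_eventuallyEq heq
    have hφIoc : φ ∈ Ioc (0:ℝ) (Real.pi/2) := ⟨hφ.1, le_of_lt hφ.2⟩
    have hOp := hODE φ hφIoc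
    have hOq := qf_ode n m φ hs
    rw [hkc] at hOp hOq
    have hp2val : pderiv2 p φ
        = -(((k:ℕ):ℝ) * (Real.cos φ / Real.sin φ)) * pderiv p φ - μ * p φ := by
      linarith
    have hq2val : qf2 n m φ
        = -(((k:ℕ):ℝ) * (Real.cos φ / Real.sin φ)) * qf1 n m φ - μ' * qf n m φ := by
      rw [hμ']; linarith
    have hsk : HasDerivAt (fun φ => Real.sin φ ^ k)
        (((k:ℕ):ℝ) * Real.sin φ ^ (k-1) * Real.cos φ) φ := (Real.hasDerivAt_sin φ).pow k
    have hinner : HasDerivAt (fun φ => p φ * qf1 n m φ - pderiv p φ * qf n m φ)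
        (pderiv p φ * qf1 n m φ + p φ * qf2 n m φ
          - (pderiv2 p φ * qf n m φ + pderiv p φ * qf1 n m φ)) φ :=
      (hp1.mul (qf1_hasDeriv n m φ)).sub (hp2.mul (qf_hasDeriv n m φ))
    have hWD := hsk.mul hinner
    have halg := wron_alg k (Real.sin φ) (Real.cos φ) (p φ) (pderiv p φ)
      (qf n m φ) (qf1 n m φ) μ μ' hs
    refine hWD.congr_deriv ?_
    rw [hp2val, hq2val]
    linear_combination halg
  have hWdint : IntervalIntegrable Wd MeasureTheory.volume 0 (Real.pi/2) := by
    apply ContinuousOn.intervalIntegrable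
    rw [uIcc_of_le (le_of_lt hπ)]
    exact continuousOn_const.mul (((Real.continuous_sin.pow k).continuousOn).mul
      (hcont.mul (qf_continuous n m).continuousOn))
  have hFTC := intervalIntegral.integral_eq_sub_of_hasDeriv_right_of_le (le_of_lt hπ)
    hWcont (fun φ hφ => (hderiv φ hφ).hasDerivWithinAt) hWdint
  have hW0 : W 0 = 0 := by
    simp [hW, qf1, Real.sin_zero, hp'0]
  have hWpi : W (Real.pi/2) = -pderiv p (Real.pi/2) := by
    simp [hW, qf, qf1, Real.sin_pi_div_two, Real.cos_pi_div_two, U1_zero, U_zero]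
  have hInt : (∫ φ in (0:ℝ)..(Real.pi/2), Wd φ)
      = (μ - μ') * ∫ φ in (0:ℝ)..(Real.pi/2), Real.sin φ ^ k * (p φ * qf n m φ) := by
    rw [hWd]
    exact intervalIntegral.integral_const_mul _ _
  rw [hFTC, hW0, hWpi, sub_zero] at hInt
  rw [hInt]

-- SW approximation lemma
lemma sw_approx (g : ℝ → ℝ) (hg : ContinuousOn g (Icc 0 (Real.pi/2))) (ε : ℝ) (hε : 0 < ε) :
    ∃ P : Polynomial ℝ, ∀ φ ∈ Icc (0:ℝ) (Real.pi/2), |g φ - P.eval (Real.cos φ ^ 2)| < ε := by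
  haveI : CompactSpace (Icc (0:ℝ) (Real.pi/2)) := isCompact_iff_compactSpace.mp isCompact_Icc
  set c2 : C(Icc (0:ℝ) (Real.pi/2), ℝ) :=
    ⟨fun x => Real.cos (x:ℝ) ^ 2, by fun_prop⟩ with hc2
  set A : Subalgebra ℝ C(Icc (0:ℝ) (Real.pi/2), ℝ) := Algebra.adjoin ℝ {c2} with hA
  have hsep : A.SeparatesPoints := by
    intro x y hxy
    refine ⟨_, ⟨c2, Algebra.subset_adjoin rfl, rfl⟩, ?_⟩
    simp only [ContinuousMap.coe_mk, hc2]
    intro h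
    apply hxy
    have hπ2 : Real.pi/2 ≤ Real.pi := by linarith [Real.pi_pos]
    have hx : (x:ℝ) ∈ Icc 0 Real.pi := ⟨x.2.1, le_trans x.2.2 hπ2⟩
    have hy : (y:ℝ) ∈ Icc 0 Real.pi := ⟨y.2.1, le_trans y.2.2 hπ2⟩
    have hcx : 0 ≤ Real.cos (x:ℝ) := Real.cos_nonneg_of_mem_Icc ⟨by linarith [x.2.1, Real.pi_pos], x.2.2⟩
    have hcy : 0 ≤ Real.cos (y:ℝ) := Real.cos_nonneg_of_mem_Icc ⟨by linarith [y.2.1, Real.pi_pos], y.2.2⟩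
    have hcc : Real.cos (x:ℝ) = Real.cos (y:ℝ) := by
      nlinarith
    exact Subtype.ext (Real.injOn_cos hx hy hcc)
  obtain ⟨P', hP'⟩ := ContinuousMap.exists_mem_subalgebra_near_continuous_of_separatesPoints
    A hsep (fun x => g (x:ℝ)) (hg.restrict) ε hε
  obtain ⟨gg, hgg⟩ := P'
  rw [hA, Algebra.adjoin_singleton_eq_range_aeval] at hgg
  obtain ⟨P, hP⟩ := hgg
  refine ⟨P, fun φ hφ => ?_⟩
  have h3 : (gg : C(Icc (0:ℝ) (Real.pi/2), ℝ)) ⟨φ, hφ⟩ = P.eval (Real.cos φ ^ 2) := by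
    rw [← hP]
    have := Polynomial.aeval_continuousMap_apply P c2 (⟨φ, hφ⟩ : Icc (0:ℝ) (Real.pi/2))
    simpa [hc2] using this
  have h2' : |gg ⟨φ, hφ⟩ - g φ| < ε := by
    simpa [Real.norm_eq_abs] using hP' ⟨φ, hφ⟩
  rw [h3] at h2'
  rw [abs_sub_comm]
  exact h2'

lemma orth_sq_nonpos (g : ℝ → ℝ) (hg : ContinuousOn g (Icc 0 (Real.pi/2)))
    (horth : ∀ P : Polynomial ℝ,
      (∫ φ in (0:ℝ)..(Real.pi/2), g φ * P.eval (Real.cos φ ^ 2)) = 0) :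
    (∫ φ in (0:ℝ)..(Real.pi/2), g φ * g φ) ≤ 0 := by
  have hπ : (0:ℝ) < Real.pi/2 := by positivity
  obtain ⟨M, hM⟩ := isCompact_Icc.exists_bound_of_continuousOn hg
  have hM0 : 0 ≤ M := le_trans (norm_nonneg _) (hM 0 ⟨le_refl 0, le_of_lt hπ⟩)
  have key : ∀ ε > (0:ℝ), (∫ φ in (0:ℝ)..(Real.pi/2), g φ * g φ) ≤ M * ε * (Real.pi/2) := by
    intro ε hε
    obtain ⟨P, hP⟩ := sw_approx g hg ε hε
    have hgint : IntervalIntegrable (fun φ => g φ * (g φ - P.eval (Real.cos φ ^ 2)))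
        MeasureTheory.volume 0 (Real.pi/2) := by
      apply ContinuousOn.intervalIntegrable
      rw [uIcc_of_le (le_of_lt hπ)]
      exact hg.mul (hg.sub ((P.continuous_eval₂ _).comp (Real.continuous_cos.pow 2)).continuousOn)
    have hsplit : (∫ φ in (0:ℝ)..(Real.pi/2), g φ * g φ)
        = ∫ φ in (0:ℝ)..(Real.pi/2), g φ * (g φ - P.eval (Real.cos φ ^ 2)) := by
      have h1 : IntervalIntegrable (fun φ => g φ * P.eval (Real.cos φ ^ 2))
          MeasureTheory.volume 0 (Real.pi/2) := by
        apply ContinuousOn.intervalIntegrable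
        rw [uIcc_of_le (le_of_lt hπ)]
        exact hg.mul ((P.continuous_eval₂ _).comp (Real.continuous_cos.pow 2)).continuousOn
      have h2 := intervalIntegral.integral_add hgint h1
      have h3 : (fun φ => g φ * (g φ - P.eval (Real.cos φ ^ 2)) + g φ * P.eval (Real.cos φ ^ 2))
          = fun φ => g φ * g φ := by funext φ; ring
      rw [h3, horth P, add_zero] at h2
      exact h2
    rw [hsplit]
    have hle : (∫ φ in (0:ℝ)..(Real.pi/2), g φ * (g φ - P.eval (Real.cos φ ^ 2)))
        ≤ ∫ _ in (0:ℝ)..(Real.pi/2), M * ε := by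
      apply intervalIntegral.integral_mono_on (le_of_lt hπ) hgint
        intervalIntegrable_const
      intro φ hφ
      have h1 : |g φ| ≤ M := by rw [← Real.norm_eq_abs]; exact hM φ hφ
      have h2 : |g φ - P.eval (Real.cos φ ^ 2)| ≤ ε := le_of_lt (hP φ hφ)
      calc g φ * (g φ - P.eval (Real.cos φ ^ 2))
          ≤ |g φ * (g φ - P.eval (Real.cos φ ^ 2))| := le_abs_self _
        _ = |g φ| * |g φ - P.eval (Real.cos φ ^ 2)| := abs_mul _ _
        _ ≤ M * ε := by
            apply mul_le_mul h1 h2 (abs_nonneg _) hM0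
    calc (∫ φ in (0:ℝ)..(Real.pi/2), g φ * (g φ - P.eval (Real.cos φ ^ 2)))
        ≤ ∫ _ in (0:ℝ)..(Real.pi/2), M * ε := hle
      _ = M * ε * (Real.pi/2) := by
          rw [intervalIntegral.integral_const]
          simp [smul_eq_mul]
          ring
  by_contra hcon
  push_neg at hcon
  set S := ∫ φ in (0:ℝ)..(Real.pi/2), g φ * g φ with hS
  have hε : 0 < S / (M * (Real.pi/2) + 1) := by
    apply div_pos hcon
    positivity
  have := key _ hε
  have hMp : 0 < M * (Real.pi/2) + 1 := by positivity
  have h4 : S / (M * (Real.pi/2) + 1) * (M * (Real.pi/2) + 1) = S :=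
    div_mul_cancel₀ S (ne_of_gt hMp)
  nlinarith [mul_le_mul_of_nonneg_right this (le_of_lt hMp), h4, hcon, hM0, hπ]

lemma gsq_pos (k : ℕ) (p : ℝ → ℝ) (hcont : ContinuousOn p (Icc 0 (Real.pi/2)))
    (hp0 : p 0 = 1) :
    0 < ∫ φ in (0:ℝ)..(Real.pi/2), (Real.sin φ ^ k * p φ) * (Real.sin φ ^ k * p φ) := by
  have hπ : (0:ℝ) < Real.pi/2 := by positivity
  have hππ : Real.pi/2 < Real.pi := by linarith [Real.pi_pos]
  set g : ℝ → ℝ := fun φ => Real.sin φ ^ k * p φ with hgdef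
  have hgc : ContinuousOn g (Icc 0 (Real.pi/2)) :=
    (Real.continuous_sin.pow k).continuousOn.mul hcont
  have hc0 : ContinuousWithinAt p (Icc 0 (Real.pi/2)) 0 := hcont 0 ⟨le_refl 0, le_of_lt hπ⟩
  have htend : Tendsto p (𝓝[Icc 0 (Real.pi/2)] 0) (𝓝 1) := by
    rw [← hp0]; exact hc0
  have hev : ∀ᶠ φ in 𝓝[Icc 0 (Real.pi/2)] 0, 0 < p φ :=
    htend.eventually (eventually_gt_nhds zero_lt_one)
  obtain ⟨δ, hδ, hball⟩ := Metric.mem_nhdsWithin_iff.mp hev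
  set b : ℝ := min (δ/2) (Real.pi/2) with hbdef
  have hb0 : 0 < b := lt_min (by linarith) hπ
  set a : ℝ := b/2 with hadef
  have ha0 : 0 < a := by positivity
  have hab : a < b := by rw [hadef]; linarith
  have hbπ : b ≤ Real.pi/2 := min_le_right _ _
  have hppos : ∀ φ ∈ Icc a b, 0 < p φ := by
    intro φ hφ
    apply hball
    constructor
    · rw [Metric.mem_ball, Real.dist_eq, sub_zero, abs_of_pos (lt_of_lt_of_le ha0 hφ.1)]
      calc φ ≤ b := hφ.2
        _ ≤ δ/2 := min_le_left _ _
        _ < δ := by linarith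
    · exact ⟨le_of_lt (lt_of_lt_of_le ha0 hφ.1), le_trans hφ.2 hbπ⟩
  have hsub : Icc a b ⊆ Icc 0 (Real.pi/2) :=
    Icc_subset_Icc (le_of_lt ha0) hbπ
  have i2 : IntervalIntegrable (fun φ => g φ * g φ) MeasureTheory.volume a b := by
    apply ContinuousOn.intervalIntegrable
    rw [uIcc_of_le (le_of_lt hab)]
    exact (hgc.mono hsub).mul (hgc.mono hsub)
  have i1 : IntervalIntegrable (fun φ => g φ * g φ) MeasureTheory.volume 0 a := by
    apply ContinuousOn.intervalIntegrable
    rw [uIcc_of_le (le_of_lt ha0)]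
    exact ((hgc.mul hgc).mono (Icc_subset_Icc (le_refl 0) (le_trans (le_of_lt hab) hbπ)))
  have i3 : IntervalIntegrable (fun φ => g φ * g φ) MeasureTheory.volume b (Real.pi/2) := by
    apply ContinuousOn.intervalIntegrable
    rw [uIcc_of_le hbπ]
    exact ((hgc.mul hgc).mono (Icc_subset_Icc (le_of_lt hb0) (le_refl _)))
  have hmid : 0 < ∫ φ in a..b, g φ * g φ := by
    apply intervalIntegral.intervalIntegral_pos_of_pos_on i2 _ hab
    intro φ hφ
    have hφab : φ ∈ Icc a b := ⟨le_of_lt hφ.1, le_of_lt hφ.2⟩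
    have hsin : 0 < Real.sin φ :=
      Real.sin_pos_of_pos_of_lt_pi (lt_of_le_of_lt (le_of_lt ha0) hφ.1)
        (lt_of_lt_of_le hφ.2 (le_trans hbπ (le_of_lt hππ)))
    have hgφ : 0 < g φ := mul_pos (pow_pos hsin k) (hppos φ hφab)
    exact mul_pos hgφ hgφ
  have e1 := intervalIntegral.integral_add_adjacent_intervals i1 i2
  have e2 := intervalIntegral.integral_add_adjacent_intervals (i1.trans i2) i3
  have n1 : 0 ≤ ∫ φ in (0:ℝ)..a, g φ * g φ :=
    intervalIntegral.integral_nonneg (le_of_lt ha0) (fun u _ => mul_self_nonneg _)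
  have n3 : 0 ≤ ∫ φ in b..(Real.pi/2), g φ * g φ :=
    intervalIntegral.integral_nonneg hbπ (fun u _ => mul_self_nonneg _)
  have : (0:ℝ) < ∫ φ in (0:ℝ)..(Real.pi/2), g φ * g φ := by linarith
  exact this

lemma U_eq (n m : ℕ) (t : ℝ) : U n m t = ∑ j ∈ Finset.range (m+1), bco n m j * t ^ (2*j) := rfl

/-- `p'(π/2) = 0` precisely when `λ` is an even positive integer. -/
theorem meridian_sol_deriv_vanishes_at_pi_div_two_iff_even (n : ℕ) (hn : 2 ≤ n)
    (lam : ℝ) (hlam : 0 < lam) (p : ℝ → ℝ) (hp : IsMeridianSol n lam p) :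
    pderiv p (Real.pi / 2) = 0 ↔ ∃ m : ℕ, 0 < m ∧ lam = 2 * (m : ℝ) := by
  have hπ : (0:ℝ) < Real.pi/2 := by positivity
  have hp' : IsMeridianSol n lam p := hp
  obtain ⟨hcont, hC1, hC2, hODE, hp0, hp'0⟩ := hp
  constructor
  · intro h0
    by_contra hno
    push_neg at hno
    have hn2 : (2:ℝ) ≤ (n:ℝ) := by exact_mod_cast hn
    have hμne : ∀ m : ℕ,
        lam * (lam + (n:ℝ) - 2) - (2*(m:ℝ)) * (2*(m:ℝ) + (n:ℝ) - 2) ≠ 0 := by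
      intro m
      have hne : lam ≠ 2*(m:ℝ) := by
        rcases Nat.eq_zero_or_pos m with hm | hm
        · subst hm; push_cast; linarith
        · exact hno m hm
      have hfac : lam * (lam + (n:ℝ) - 2) - (2*(m:ℝ)) * (2*(m:ℝ) + (n:ℝ) - 2)
          = (lam - 2*(m:ℝ)) * (lam + 2*(m:ℝ) + (n:ℝ) - 2) := by ring
      rw [hfac]
      apply mul_ne_zero (sub_ne_zero.mpr hne)
      have hm0 : (0:ℝ) ≤ (m:ℝ) := Nat.cast_nonneg m
      have : (0:ℝ) < lam + 2*(m:ℝ) + (n:ℝ) - 2 := by linarith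
      exact ne_of_gt this
    set k := n - 2 with hk
    set J : ℕ → ℝ :=
      fun i => ∫ φ in (0:ℝ)..(Real.pi/2), Real.sin φ ^ k * p φ * Real.cos φ ^ (2*i) with hJdef
    have hJint : ∀ i : ℕ, IntervalIntegrable
        (fun φ => Real.sin φ ^ k * p φ * Real.cos φ ^ (2*i))
        MeasureTheory.volume 0 (Real.pi/2) := by
      intro i
      apply ContinuousOn.intervalIntegrable
      rw [uIcc_of_le (le_of_lt hπ)]
      exact ((Real.continuous_sin.pow k).continuousOn.mul hcont).mul
        (Real.continuous_cos.pow (2*i)).continuousOn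
    have hqzero : ∀ m : ℕ,
        (∫ φ in (0:ℝ)..(Real.pi/2), Real.sin φ ^ k * (p φ * qf n m φ)) = 0 := by
      intro m
      have hkey := wronskian_key n hn lam p hp' m
      rw [h0, neg_zero] at hkey
      rcases mul_eq_zero.mp hkey.symm with hc | hI
      · exact absurd hc (hμne m)
      · exact hI
    have hexp : ∀ i : ℕ, (∫ φ in (0:ℝ)..(Real.pi/2), Real.sin φ ^ k * (p φ * qf n i φ))
        = ∑ j ∈ Finset.range (i+1), bco n i j * J j := by
      intro i
      have hfe : (fun φ => Real.sin φ ^ k * (p φ * qf n i φ))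
          = fun φ => ∑ j ∈ Finset.range (i+1),
              bco n i j * (Real.sin φ ^ k * p φ * Real.cos φ ^ (2*j)) := by
        funext φ
        rw [qf, U_eq, Finset.mul_sum, Finset.mul_sum]
        apply Finset.sum_congr rfl
        intro j _
        ring
      rw [hfe, intervalIntegral.integral_finset_sum
        (fun j _ => (hJint j).const_mul (bco n i j))]
      exact Finset.sum_congr rfl fun j _ => intervalIntegral.integral_const_mul _ _
    have hJzero : ∀ i, J i = 0 := by
      intro i
      induction i using Nat.strong_induction_on with
      | _ i ih =>
        have h := hqzero i
        rw [hexp i, Finset.sum_range_succ] at h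
        have hrest : ∑ j ∈ Finset.range i, bco n i j * J j = 0 :=
          Finset.sum_eq_zero fun j hj => by rw [ih j (Finset.mem_range.mp hj)]; ring
        rw [hrest, zero_add] at h
        exact (mul_eq_zero.mp h).resolve_left (bco_ne_zero n i hn i (le_refl i))
    have horth : ∀ P : Polynomial ℝ,
        (∫ φ in (0:ℝ)..(Real.pi/2), (Real.sin φ ^ k * p φ) * P.eval (Real.cos φ ^ 2)) = 0 := by
      intro P
      have hfe : (fun φ => (Real.sin φ ^ k * p φ) * P.eval (Real.cos φ ^ 2))
          = fun φ => ∑ i ∈ Finset.range (P.natDegree + 1),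
              P.coeff i * (Real.sin φ ^ k * p φ * Real.cos φ ^ (2*i)) := by
        funext φ
        rw [Polynomial.eval_eq_sum_range, Finset.mul_sum]
        apply Finset.sum_congr rfl
        intro i _
        rw [pow_mul]
        ring
      rw [hfe, intervalIntegral.integral_finset_sum
        (fun i _ => (hJint i).const_mul _)]
      apply Finset.sum_eq_zero
      intro i _
      rw [intervalIntegral.integral_const_mul,
        show (∫ φ in (0:ℝ)..(Real.pi/2), Real.sin φ ^ k * p φ * Real.cos φ ^ (2*i)) = (0:ℝ)
          from hJzero i, mul_zero]
    have hgc : ContinuousOn (fun φ => Real.sin φ ^ k * p φ) (Icc 0 (Real.pi/2)) :=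
      (Real.continuous_sin.pow k).continuousOn.mul hcont
    have hle := orth_sq_nonpos _ hgc horth
    have hpos := gsq_pos k p hcont hp0
    linarith
  · rintro ⟨m, hm, heq⟩
    have hkey := wronskian_key n hn lam p hp' m
    have hc : lam * (lam + (n:ℝ) - 2) - (2*(m:ℝ)) * (2*(m:ℝ) + (n:ℝ) - 2) = 0 := by
      rw [heq]; ring
    rw [hc, zero_mul] at hkey
    linarith
end
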